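/- arXiv:2603.29896 — 7 statements merged into one kernel-verified Lean document; each statement's English description precedes it below -/
import Mathlib

section
/- Let (M,φ) be a nonzero finite symplectic ℤ_d-module. Then there exist a k ≥ 1 and positive integers d₁, d₂, …, d_k with 1 < d₁ ∣ d₂ ∣ … ∣ d_k ∣ d, together with a ℤ_d-linear isomorphism M ≅ S_{d₁} ⊕ S_{d₂} ⊕ … ⊕ S_{d_k} carrying φ to the orthogonal direct sum of the elementary symplectic forms. -/
set_option linter.unusedSectionVars false
set_option linter.unusedVariables false

namespace SympAux

/-- The map `ZMod n → ZMod d`, `a ↦ a.val * (d/n)`. -/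
def mu (d n : ℕ) (a : ZMod n) : ZMod d := (a.val : ZMod d) * ((d / n : ℕ) : ZMod d)

/-- The partial inverse of `mu`. -/
def ka (d n : ℕ) (v : ZMod d) : ZMod n := ((v.val / (d / n) : ℕ) : ZMod n)

variable {d n : ℕ} [NeZero d]

lemma n_ne_zero (hnd : n ∣ d) : n ≠ 0 := by
  rintro rfl; exact absurd (zero_dvd_iff.mp hnd) (NeZero.ne d)

lemma hdn_pos (hnd : n ∣ d) : 0 < d / n :=
  Nat.div_pos (Nat.le_of_dvd (Nat.pos_of_ne_zero (NeZero.ne d)) hnd)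
    (Nat.pos_of_ne_zero (n_ne_zero hnd))

lemma key_mod (hnd : n ∣ d) (s : ℕ) :
    (s : ZMod d) * ((d / n : ℕ) : ZMod d) = ((s % n : ℕ) : ZMod d) * ((d / n : ℕ) : ZMod d) := by
  have h0 : (n : ZMod d) * ((d / n : ℕ) : ZMod d) = 0 := by
    rw [← Nat.cast_mul, Nat.mul_div_cancel' hnd, ZMod.natCast_self]
  have hcast : (s : ZMod d) = (n : ZMod d) * ((s / n : ℕ) : ZMod d) + ((s % n : ℕ) : ZMod d) := by
    rw [← Nat.cast_mul, ← Nat.cast_add, Nat.div_add_mod]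
  linear_combination ((d / n : ℕ) : ZMod d) * hcast + ((s / n : ℕ) : ZMod d) * h0

lemma dvd_val_of_mul_eq_zero (hnd : n ∣ d) {v : ZMod d} (hv : (n : ZMod d) * v = 0) :
    (d / n) ∣ v.val := by
  have h1 : ((n * v.val : ℕ) : ZMod d) = 0 := by
    push_cast
    rw [ZMod.natCast_val, ZMod.cast_id]
    exact hv
  have h2 : d ∣ n * v.val := (ZMod.natCast_eq_zero_iff _ _).mp h1
  have h3 : n * (d / n) ∣ n * v.val := by rwa [Nat.mul_div_cancel' hnd]
  exact (Nat.mul_dvd_mul_iff_left (Nat.pos_of_ne_zero (n_ne_zero hnd))).mp h3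

lemma mu_natCast (hnd : n ∣ d) (hn1 : 1 < n) (s : ℕ) :
    mu d n (s : ZMod n) = (s : ZMod d) * ((d / n : ℕ) : ZMod d) := by
  haveI : NeZero n := ⟨by omega⟩
  rw [mu, ZMod.val_natCast, ← key_mod hnd]

lemma mu_add (hnd : n ∣ d) (hn1 : 1 < n) (a b : ZMod n) :
    mu d n (a + b) = mu d n a + mu d n b := by
  haveI : NeZero n := ⟨by omega⟩
  have h : ((a + b).val : ZMod d) * ((d / n : ℕ) : ZMod d)
      = ((a.val + b.val : ℕ) : ZMod d) * ((d / n : ℕ) : ZMod d) := by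
    rw [ZMod.val_add, ← key_mod hnd]
  rw [mu, h]
  push_cast
  rw [add_mul]
  rfl

lemma mu_zero (hn1 : 1 < n) : mu d n (0 : ZMod n) = 0 := by
  haveI : NeZero n := ⟨by omega⟩
  simp [mu]

lemma mu_neg (hnd : n ∣ d) (hn1 : 1 < n) (a : ZMod n) : mu d n (-a) = - mu d n a := by
  have h := mu_add hnd hn1 (-a) a
  rw [neg_add_cancel, mu_zero hn1] at h
  linear_combination -h

lemma mu_inj (hnd : n ∣ d) (hn1 : 1 < n) {a b : ZMod n} (h : mu d n a = mu d n b) : a = b := by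
  haveI : NeZero n := ⟨by omega⟩
  have hlt : ∀ c : ZMod n, c.val * (d / n) < d := by
    intro c
    calc c.val * (d / n) < n * (d / n) :=
          (Nat.mul_lt_mul_right (hdn_pos hnd)).mpr (ZMod.val_lt c)
      _ = d := Nat.mul_div_cancel' hnd
  have h' : ((a.val * (d / n) : ℕ) : ZMod d) = ((b.val * (d / n) : ℕ) : ZMod d) := by
    push_cast; exact h
  have h2 : a.val * (d / n) = b.val * (d / n) := by
    have := congrArg ZMod.val h'
    rwa [ZMod.val_cast_of_lt (hlt a), ZMod.val_cast_of_lt (hlt b)] at this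
  have h3 : a.val = b.val := Nat.eq_of_mul_eq_mul_right (hdn_pos hnd) h2
  exact ZMod.val_injective n h3

lemma mu_ka (hnd : n ∣ d) (hn1 : 1 < n) {v : ZMod d} (hv : (d / n) ∣ v.val) :
    mu d n (ka d n v) = v := by
  haveI : NeZero n := ⟨by omega⟩
  have hlt : v.val / (d / n) < n := by
    rw [Nat.div_lt_iff_lt_mul (hdn_pos hnd)]
    calc v.val < d := ZMod.val_lt v
      _ = n * (d / n) := (Nat.mul_div_cancel' hnd).symm
  rw [ka, mu, ZMod.val_natCast, Nat.mod_eq_of_lt hlt, ← Nat.cast_mul,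
    Nat.div_mul_cancel hv, ZMod.natCast_val, ZMod.cast_id]

lemma dvd_val_mu (hnd : n ∣ d) (hn1 : 1 < n) (a : ZMod n) : (d / n) ∣ (mu d n a).val := by
  apply dvd_val_of_mul_eq_zero hnd
  have h0 : (n : ZMod d) * ((d / n : ℕ) : ZMod d) = 0 := by
    rw [← Nat.cast_mul, Nat.mul_div_cancel' hnd, ZMod.natCast_self]
  rw [mu]
  linear_combination (a.val : ZMod d) * h0

lemma ka_mu (hnd : n ∣ d) (hn1 : 1 < n) (a : ZMod n) : ka d n (mu d n a) = a :=
  mu_inj hnd hn1 (mu_ka hnd hn1 (dvd_val_mu hnd hn1 a))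

lemma mod_nsmul {M : Type*} [AddCommGroup M] {g : M} (hg : n • g = 0) (s : ℕ) :
    (s % n) • g = s • g := by
  conv_rhs => rw [← Nat.div_add_mod s n, add_smul, mul_comm, mul_smul, hg, smul_zero, zero_add]

lemma val_add_smul {M : Type*} [AddCommGroup M] (hn1 : 1 < n) {g : M} (hg : n • g = 0)
    (x y : ZMod n) : (x + y).val • g = x.val • g + y.val • g := by
  haveI : NeZero n := ⟨by omega⟩
  rw [ZMod.val_add, mod_nsmul hg, add_smul]

lemma val_neg_smul {M : Type*} [AddCommGroup M] (hn1 : 1 < n) {g : M} (hg : n • g = 0)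
    (x : ZMod n) : (-x).val • g = - (x.val • g) := by
  have h := val_add_smul hn1 hg (-x) x
  rw [neg_add_cancel] at h
  haveI : NeZero n := ⟨by omega⟩
  rw [ZMod.val_zero, zero_smul] at h
  exact eq_neg_of_add_eq_zero_left h.symm
  
end SympAux

namespace SympAux2
open SympAux

/-- `Fin.snoc` as an `AddEquiv`. -/
def snocAddEquiv {k : ℕ} (Q : Fin (k + 1) → Type) [∀ i, AddCommGroup (Q i)] :
    (Q (Fin.last k) × ((j : Fin k) → Q j.castSucc)) ≃+ ((i : Fin (k + 1)) → Q i) :=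
  AddEquiv.mk' (Fin.snocEquiv Q) (by
    intro x y
    funext i
    refine Fin.lastCases ?_ (fun j => ?_) i <;>
      simp [Fin.snocEquiv, Fin.snoc_last, Fin.snoc_castSucc])

@[simp] lemma snocAddEquiv_last {k : ℕ} (Q : Fin (k + 1) → Type) [∀ i, AddCommGroup (Q i)]
    (x : Q (Fin.last k) × ((j : Fin k) → Q j.castSucc)) :
    snocAddEquiv Q x (Fin.last k) = x.1 :=
  Fin.snoc_last _ _

@[simp] lemma snocAddEquiv_castSucc {k : ℕ} (Q : Fin (k + 1) → Type) [∀ i, AddCommGroup (Q i)]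
    (x : Q (Fin.last k) × ((j : Fin k) → Q j.castSucc)) (j : Fin k) :
    snocAddEquiv Q x j.castSucc = x.2 j :=
  Fin.snoc_castSucc _ _ _

/-- The conclusion of the main theorem. -/
def Concl (d : ℕ) (M : Type) [AddCommGroup M] [Module (ZMod d) M]
    (φ : M →ₗ[ZMod d] M →ₗ[ZMod d] ZMod d) : Prop :=
  ∃ (k : ℕ) (D : Fin k → ℕ),
    0 < k ∧
    (∀ i : Fin k, 1 < D i) ∧
    (∀ i j : Fin k, i ≤ j → D i ∣ D j) ∧
    (∀ i : Fin k, D i ∣ d) ∧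
    ∃ e : M ≃+ ((i : Fin k) → ZMod (D i) × ZMod (D i)),
      ∀ m m' : M,
        φ m m' =
          ∑ i : Fin k,
            ((d / D i : ℕ) : ZMod d) *
              (((e m i).1.val : ZMod d) * ((e m' i).2.val : ZMod d)
                - ((e m' i).1.val : ZMod d) * ((e m i).2.val : ZMod d))

end SympAux2

namespace SympMain
open SympAux SympAux2

set_option maxHeartbeats 1000000 in
theorem main (d : ℕ) [NeZero d] (N : ℕ) :
    ∀ (M : Type) [AddCommGroup M] [Module (ZMod d) M] [Finite M] [Nontrivial M],
      Nat.card M ≤ N →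
      ∀ (φ : M →ₗ[ZMod d] M →ₗ[ZMod d] ZMod d),
        (∀ m : M, φ m m = 0) →
        (∀ m₀ : M, (∀ m : M, φ m₀ m = 0) → m₀ = 0) →
        Concl d M φ := by
  induction N with
  | zero =>
    intro M _ _ _ _ hcard φ _ _
    have := Nat.card_pos (α := M)
    omega
  | succ N ih =>
    intro M _ _ _ _ hcard φ halt hsymp
    haveI : IsPrincipalIdealRing (ZMod d) :=
      IsPrincipalIdealRing.of_surjective (Int.castRingHom (ZMod d)) ZMod.intCast_surjective
    have hskew : ∀ a b : M, φ a b = - φ b a := by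
      intro a b
      have h := halt (a + b)
      simp only [map_add, LinearMap.add_apply] at h
      rw [halt a, halt b] at h
      linear_combination h
    set n := AddMonoid.exponent M with hn
    have hsmul : ∀ m : M, n • m = 0 := fun m => AddMonoid.exponent_nsmul_eq_zero m
    have hnd : n ∣ d := by
      apply AddMonoid.exponent_dvd_of_forall_nsmul_eq_zero
      intro m
      rw [← Nat.cast_smul_eq_nsmul (ZMod d), ZMod.natCast_self, zero_smul]
    have hn0 : n ≠ 0 := n_ne_zero hnd
    have hn1 : 1 < n := by
      rcases Nat.lt_or_ge n 2 with h | h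
      · exfalso
        have hne : n = 1 := by omega
        obtain ⟨a, b, hab⟩ := exists_pair_ne M
        apply hab
        have ha := hsmul a; have hb := hsmul b
        rw [hne, one_nsmul] at ha hb
        rw [ha, hb]
      · exact h
    haveI : NeZero n := ⟨hn0⟩
    set δ : ZMod d := ((d / n : ℕ) : ZMod d) with hδdef
    have hEE : AddMonoid.ExponentExists M := AddMonoid.exponent_ne_zero.mp hn0
    obtain ⟨x, hx⟩ := AddMonoid.exists_addOrderOf_eq_exponent hEE
    obtain ⟨g, hg⟩ := (IsPrincipalIdealRing.principal (LinearMap.range (φ.flip x))).principal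
    have hgmem : g ∈ LinearMap.range (φ.flip x) := by
      rw [hg]; exact Submodule.mem_span_singleton_self g
    obtain ⟨z, hz⟩ := hgmem
    rw [LinearMap.flip_apply] at hz
    have hvals : ∀ w : M, ∃ a : ZMod d, φ w x = a * g := by
      intro w
      have hmem : φ w x ∈ LinearMap.range (φ.flip x) := ⟨w, LinearMap.flip_apply _ _ _⟩
      rw [hg] at hmem
      obtain ⟨a, ha⟩ := Submodule.mem_span_singleton.mp hmem
      exact ⟨a, by rw [← ha, smul_eq_mul]⟩
    have hng : n • g = 0 := by
      calc n • g = φ z (n • x) := by rw [map_nsmul, hz]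
        _ = 0 := by rw [hsmul x, map_zero]
    have hordg : addOrderOf g = n := by
      have hdvd : addOrderOf g ∣ n := addOrderOf_dvd_of_nsmul_eq_zero hng
      by_contra hne
      have hpos : 0 < addOrderOf g := addOrderOf_pos g
      have hlt : addOrderOf g < n := lt_of_le_of_ne (Nat.le_of_dvd (by omega) hdvd) hne
      have hex : (addOrderOf g) • x ≠ 0 := by
        intro h0
        have hdx : addOrderOf x ∣ addOrderOf g := addOrderOf_dvd_of_nsmul_eq_zero h0
        rw [hx] at hdx
        have := Nat.le_of_dvd hpos hdx
        omega
      apply hex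
      apply hsymp
      intro m
      have hge : (addOrderOf g) • g = 0 := addOrderOf_nsmul_eq_zero g
      obtain ⟨a, ha⟩ := hvals m
      have h1 : φ m ((addOrderOf g) • x) = 0 := by
        calc φ m ((addOrderOf g) • x) = (addOrderOf g) • φ m x := map_nsmul (φ m) _ x
          _ = (addOrderOf g) • (a * g) := by rw [ha]
          _ = a * ((addOrderOf g) • g) := by rw [nsmul_eq_mul, nsmul_eq_mul]; ring
          _ = 0 := by rw [hge, mul_zero]
      rw [hskew, h1, neg_zero]
    -- normalize the generator
    have hcval : ((g.val : ℕ) : ZMod d) = g := by rw [ZMod.natCast_val, ZMod.cast_id]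
    have hord2 : addOrderOf ((g.val : ℕ) : ZMod d) = d / Nat.gcd d g.val :=
      ZMod.addOrderOf_coe g.val (NeZero.ne d)
    rw [hcval, hordg] at hord2
    have hgcd : Nat.gcd d g.val = d / n := by
      rw [hord2, Nat.div_div_self (Nat.gcd_dvd_left d g.val) (NeZero.ne d)]
    have hdvd_gval : (d / n) ∣ g.val := hgcd ▸ Nat.gcd_dvd_right d g.val
    have htval : (d / n) * (g.val / (d / n)) = g.val := Nat.mul_div_cancel' hdvd_gval
    set t := g.val / (d / n) with htdef
    have hcop : Nat.Coprime t n := by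
      have h1 : d = (d / n) * n := (Nat.div_mul_cancel hnd).symm
      have h2 : Nat.gcd ((d / n) * n) ((d / n) * t) = (d / n) * Nat.gcd n t :=
        Nat.gcd_mul_left _ _ _
      rw [← h1, htval, hgcd] at h2
      have h3 : Nat.gcd n t = 1 :=
        Nat.eq_of_mul_eq_mul_left (hdn_pos hnd) (by rw [mul_one]; exact h2.symm)
      exact Nat.coprime_comm.mp h3
    obtain ⟨U, hU⟩ := ZMod.unitsMap_surjective hnd (ZMod.unitOfCoprime t hcop)
    have hUc : (U : ZMod d) * δ = g := by
      have h2 := congrArg (Units.val) hU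
      rw [ZMod.unitsMap_def, Units.coe_map, ZMod.coe_unitOfCoprime] at h2
      rw [MonoidHom.coe_coe, ZMod.castHom_apply, ← ZMod.natCast_val] at h2
      have h3 : (U : ZMod d).val % n = t % n := (ZMod.natCast_eq_natCast_iff _ _ _).mp h2
      calc (U : ZMod d) * δ = (((U : ZMod d).val : ℕ) : ZMod d) * δ := by
            rw [ZMod.natCast_val, ZMod.cast_id]
        _ = (((U : ZMod d).val % n : ℕ) : ZMod d) * δ := key_mod hnd _
        _ = ((t % n : ℕ) : ZMod d) * δ := by rw [h3]
        _ = ((t : ℕ) : ZMod d) * δ := (key_mod hnd t).symm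
        _ = (((d / n) * t : ℕ) : ZMod d) := by push_cast [hδdef]; ring
        _ = g := by rw [htval, hcval]
    set e₁ := z with he₁
    set e₂ := ((U⁻¹ : (ZMod d)ˣ) : ZMod d) • x with he₂
    have hφ12 : φ e₁ e₂ = δ := by
      rw [he₂, map_smul, smul_eq_mul, hz, ← hUc, Units.inv_mul_cancel_left]
    have hφ21 : φ e₂ e₁ = -δ := by rw [hskew, hφ12]
    have h1smul : n • e₁ = 0 := hsmul e₁
    have h2smul : n • e₂ = 0 := hsmul e₂
    have hfst : ∀ (k : ℕ) (w m' : M), φ (k • w) m' = k • φ w m' := by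
      intro k w m'
      induction k with
      | zero => simp
      | succ k hk => rw [succ_nsmul, succ_nsmul, map_add, LinearMap.add_apply, hk]
    have hker : ∀ w m : M, (d / n) ∣ (φ w m).val := by
      intro w m
      apply dvd_val_of_mul_eq_zero hnd
      calc (n : ZMod d) * φ w m = n • φ w m := (nsmul_eq_mul _ _).symm
        _ = φ (n • w) m := (hfst n w m).symm
        _ = 0 := by rw [hsmul w, map_zero, LinearMap.zero_apply]
    set A : M → ZMod n := fun m => ka d n (φ e₁ m) with hA
    set B : M → ZMod n := fun m => ka d n (φ e₂ m) with hB
    have hmuA : ∀ m, mu d n (A m) = φ e₁ m := fun m => mu_ka hnd hn1 (hker e₁ m)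
    have hmuB : ∀ m, mu d n (B m) = φ e₂ m := fun m => mu_ka hnd hn1 (hker e₂ m)
    have hAadd : ∀ m m', A (m + m') = A m + A m' := by
      intro m m'
      apply mu_inj hnd hn1
      rw [mu_add hnd hn1, hmuA, hmuA, hmuA, map_add]
    have hBadd : ∀ m m', B (m + m') = B m + B m' := by
      intro m m'
      apply mu_inj hnd hn1
      rw [mu_add hnd hn1, hmuB, hmuB, hmuB, map_add]
    set p : M → ZMod n := fun m => - B m with hp
    set q : M → ZMod n := A with hq
    set r : M → M := fun m => m - (p m).val • e₁ - (q m).val • e₂ with hr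
    have hmup : ∀ m, mu d n (p m) = - φ e₂ m := by
      intro m
      rw [hp]
      show mu d n (-(B m)) = - φ e₂ m
      rw [mu_neg hnd hn1, hmuB]
    have hmuq : ∀ m, mu d n (q m) = φ e₁ m := hmuA
    have hr1 : ∀ m, φ e₁ (r m) = 0 := by
      intro m
      rw [hr]
      show φ e₁ (m - (p m).val • e₁ - (q m).val • e₂) = 0
      rw [map_sub, map_sub, map_nsmul, map_nsmul, halt e₁, hφ12, smul_zero, sub_zero,
        nsmul_eq_mul]
      have : ((q m).val : ZMod d) * δ = φ e₁ m := hmuq m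
      rw [this, sub_self]
    have hr2 : ∀ m, φ e₂ (r m) = 0 := by
      intro m
      rw [hr]
      show φ e₂ (m - (p m).val • e₁ - (q m).val • e₂) = 0
      rw [map_sub, map_sub, map_nsmul, map_nsmul, halt e₂, hφ21, smul_zero, sub_zero,
        nsmul_eq_mul, mul_neg]
      have : ((p m).val : ZMod d) * δ = - φ e₂ m := hmup m
      rw [this, sub_neg_eq_add, add_neg_cancel]
    set M₀ : Submodule (ZMod d) M := LinearMap.ker (φ e₁) ⊓ LinearMap.ker (φ e₂) with hM₀
    have hrmem : ∀ m, r m ∈ M₀ := fun m =>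
      Submodule.mem_inf.mpr ⟨LinearMap.mem_ker.mpr (hr1 m), LinearMap.mem_ker.mpr (hr2 m)⟩
    have hM₀mem : ∀ w : M, w ∈ M₀ → φ e₁ w = 0 ∧ φ e₂ w = 0 := by
      intro w hw
      obtain ⟨h1, h2⟩ := Submodule.mem_inf.mp hw
      exact ⟨LinearMap.mem_ker.mp h1, LinearMap.mem_ker.mp h2⟩
    have hrec : ∀ m : M, (p m).val • e₁ + (q m).val • e₂ + r m = m := by
      intro m
      rw [hr]
      show (p m).val • e₁ + (q m).val • e₂ + (m - (p m).val • e₁ - (q m).val • e₂) = m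
      abel
    -- additivity of the coordinates
    have hpadd : ∀ m m', p (m + m') = p m + p m' := by
      intro m m'
      show -(B (m + m')) = -(B m) + -(B m')
      rw [hBadd]; abel
    have hqadd : ∀ m m', q (m + m') = q m + q m' := hAadd
    have hradd : ∀ m m', r (m + m') = r m + r m' := by
      intro m m'
      show (m + m') - (p (m+m')).val • e₁ - (q (m+m')).val • e₂
          = (m - (p m).val • e₁ - (q m).val • e₂) + (m' - (p m').val • e₁ - (q m').val • e₂)
      rw [hpadd, hqadd, val_add_smul hn1 h1smul, val_add_smul hn1 h2smul]
      abel
    -- the splitting equivalence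
    have hright : ∀ (a b : ZMod n) (w : M) (hw : w ∈ M₀),
        p (a.val • e₁ + b.val • e₂ + w) = a ∧ q (a.val • e₁ + b.val • e₂ + w) = b ∧
        r (a.val • e₁ + b.val • e₂ + w) = w := by
      intro a b w hw
      obtain ⟨hw1, hw2⟩ := hM₀mem w hw
      set G := a.val • e₁ + b.val • e₂ + w with hG
      have hG1 : φ e₁ G = mu d n b := by
        rw [hG, map_add, map_add, map_nsmul, map_nsmul, halt e₁, hw1, smul_zero,
          zero_add, add_zero, hφ12, nsmul_eq_mul]
        rfl
      have hG2 : φ e₂ G = mu d n (-a) := by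
        rw [hG, map_add, map_add, map_nsmul, map_nsmul, halt e₂, hw2, smul_zero,
          add_zero, add_zero, hφ21, nsmul_eq_mul, mul_neg, mu_neg hnd hn1]
        rfl
      have hqG : q G = b := by
        show A G = b
        have : mu d n (A G) = mu d n b := by rw [hmuA, hG1]
        exact mu_inj hnd hn1 this
      have hpG : p G = a := by
        show -(B G) = a
        have : mu d n (B G) = mu d n (-a) := by rw [hmuB, hG2]
        rw [mu_inj hnd hn1 this, neg_neg]
      refine ⟨hpG, hqG, ?_⟩
      show G - (p G).val • e₁ - (q G).val • e₂ = w
      rw [hpG, hqG, hG]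
      abel
    let E : M ≃+ ((ZMod n × ZMod n) × M₀) :=
      AddEquiv.mk' ⟨fun m => ((p m, q m), ⟨r m, hrmem m⟩),
        fun y => y.1.1.val • e₁ + y.1.2.val • e₂ + (y.2 : M),
        fun m => hrec m,
        fun y => by
          obtain ⟨⟨a, b⟩, w, hw⟩ := y
          obtain ⟨h1, h2, h3⟩ := hright a b w hw
          simp only [Prod.mk.injEq, Subtype.mk.injEq]
          exact ⟨⟨h1, h2⟩, h3⟩⟩
        (fun m m' => by
          simp only [Equiv.coe_fn_mk, Prod.mk.injEq, Subtype.mk.injEq, Prod.mk_add_mk,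
            AddMemClass.mk_add_mk]
          exact ⟨⟨hpadd m m', hqadd m m'⟩, hradd m m'⟩)
    have hEapp : ∀ m : M, E m = ((p m, q m), (⟨r m, hrmem m⟩ : M₀)) := fun m => rfl
    -- decomposition of the form
    have hdecomp : ∀ m m' : M, φ m m' =
        δ * (((p m).val : ZMod d) * ((q m').val : ZMod d)
          - ((p m').val : ZMod d) * ((q m).val : ZMod d)) + φ (r m) (r m') := by
      intro m m'
      conv_lhs => rw [← hrec m, ← hrec m']
      have happ : ∀ (k : ℕ) (f : M →ₗ[ZMod d] ZMod d) (w : M), (k • f) w = k • (f w) := by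
        intro k f w
        induction k with
        | zero => simp
        | succ k hk => rw [succ_nsmul, succ_nsmul, LinearMap.add_apply, hk]
      have hrm1 : φ (r m) e₁ = 0 := by rw [hskew, hr1 m, neg_zero]
      have hrm2 : φ (r m) e₂ = 0 := by rw [hskew, hr2 m, neg_zero]
      simp only [map_add, LinearMap.add_apply, hfst, map_nsmul, happ, halt e₁, halt e₂,
        hφ12, hφ21, hr1 m', hr2 m', hrm1, hrm2, smul_zero, add_zero, zero_add,
        nsmul_eq_mul, mul_neg]
      ring
    -- the restricted form
    set φ' : M₀ →ₗ[ZMod d] M₀ →ₗ[ZMod d] ZMod d :=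
      (φ.domRestrict M₀).compl₂ M₀.subtype with hφ'def
    have hφ'app : ∀ a b : M₀, φ' a b = φ (a : M) (b : M) := by
      intro a b
      simp [hφ'def, LinearMap.compl₂_apply, LinearMap.domRestrict_apply]
    have halt' : ∀ w : M₀, φ' w w = 0 := fun w => by rw [hφ'app]; exact halt _
    have hsymp' : ∀ w₀ : M₀, (∀ w : M₀, φ' w₀ w = 0) → w₀ = 0 := by
      intro w₀ h0
      have hw := w₀.2
      obtain ⟨hw1, hw2⟩ := hM₀mem _ hw
      apply Subtype.ext
      apply hsymp
      intro m
      have hm := hrec m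
      calc φ (w₀ : M) m = φ (w₀ : M) ((p m).val • e₁ + (q m).val • e₂ + r m) := by rw [hm]
        _ = (p m).val • φ (w₀ : M) e₁ + (q m).val • φ (w₀ : M) e₂ + φ (w₀ : M) (r m) := by
            rw [map_add, map_add, map_nsmul, map_nsmul]
        _ = 0 := by
            have h1 : φ (w₀ : M) e₁ = 0 := by rw [hskew, hw1, neg_zero]
            have h2 : φ (w₀ : M) e₂ = 0 := by rw [hskew, hw2, neg_zero]
            have h3 : φ (w₀ : M) (r m) = 0 := by
              have := h0 ⟨r m, hrmem m⟩
              rwa [hφ'app] at this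
            rw [h1, h2, h3, smul_zero, smul_zero, add_zero, add_zero]
    rcases subsingleton_or_nontrivial M₀ with hsub | hnontriv
    · -- the orthogonal complement is trivial
      refine ⟨1, fun _ => n, one_pos, fun _ => hn1, fun _ _ _ => dvd_rfl, fun _ => hnd, ?_⟩
      let E2 : ((ZMod n × ZMod n) × M₀) ≃+ (ZMod n × ZMod n) :=
        AddEquiv.mk' ⟨fun y => y.1, fun v => (v, 0),
          fun y => by
            obtain ⟨v, w⟩ := y
            exact Prod.ext_iff.mpr ⟨rfl, Subsingleton.elim _ _⟩,
          fun v => rfl⟩ (fun y y' => rfl)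
      let E3 : (ZMod n × ZMod n) ≃+ (Fin 1 → ZMod n × ZMod n) :=
        AddEquiv.mk' ⟨fun v _ => v, fun f => f 0,
          fun v => rfl,
          fun f => by
            funext i
            rw [Subsingleton.elim i 0]⟩ (fun v v' => rfl)
      refine ⟨E.trans (E2.trans E3), ?_⟩
      intro m m'
      rw [Fin.sum_univ_one]
      have hr0 : ∀ mm : M, r mm = 0 := by
        intro mm
        have h0 : (⟨r mm, hrmem mm⟩ : M₀) = 0 := Subsingleton.elim _ _
        exact congrArg Subtype.val h0
      have hd2 := hdecomp m m'
      rw [hr0 m, map_zero, LinearMap.zero_apply, add_zero] at hd2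
      have hE13 : ∀ mm : M, (E.trans (E2.trans E3)) mm 0 = (p mm, q mm) := fun mm => rfl
      rw [hE13 m, hE13 m']
      exact hd2
    · -- recurse on the orthogonal complement
      have hcardM : Nat.card M = n * n * Nat.card M₀ := by
        have hc := Nat.card_congr E.toEquiv
        simp only [Nat.card_prod, Nat.card_zmod] at hc
        exact hc
      have hM₀pos : 0 < Nat.card M₀ := Nat.card_pos
      have hle : Nat.card M₀ ≤ N := by
        have h4 : 2 * 2 * Nat.card M₀ ≤ n * n * Nat.card M₀ :=
          Nat.mul_le_mul (Nat.mul_le_mul hn1 hn1) le_rfl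
        omega
      obtain ⟨k, D, hk, hD1, hchain, hDd, e', hform'⟩ := ih M₀ hle φ' halt' hsymp'
      have hDn : ∀ i : Fin k, D i ∣ n := by
        intro i
        set w : M₀ := e'.symm (Pi.single i ((1 : ZMod (D i)), (0 : ZMod (D i)))) with hw
        have h0 : n • w = 0 := by
          apply Subtype.ext
          rw [AddSubmonoidClass.coe_nsmul]
          exact hsmul _
        have h1 : n • (Pi.single i ((1 : ZMod (D i)), (0 : ZMod (D i)))
            : (j : Fin k) → ZMod (D j) × ZMod (D j)) = 0 := by
          have h2 := congrArg e' h0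
          rwa [map_nsmul, hw, AddEquiv.apply_symm_apply, map_zero] at h2
        have h2 := congrFun h1 i
        rw [Pi.smul_apply, Pi.single_eq_same, Pi.zero_apply] at h2
        have h3 := congrArg Prod.fst h2
        simp only [Prod.fst_zero] at h3
        have h4 : (n : ZMod (D i)) = 0 := by
          have h5 : n • (1 : ZMod (D i)) = (n : ZMod (D i)) := by
            rw [nsmul_eq_mul, mul_one]
          rw [← h5]
          exact_mod_cast h3
        exact (ZMod.natCast_eq_zero_iff n (D i)).mp h4
      have hcast : ∀ j : Fin k, D j = Fin.snoc (α := fun _ => ℕ) D n (Fin.castSucc j) :=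
        fun j => by simp
      have hlastc : n = Fin.snoc (α := fun _ => ℕ) D n (Fin.last k) :=
        by simp
      refine ⟨k + 1, Fin.snoc D n, Nat.succ_pos k, ?_, ?_, ?_, ?_⟩
      · intro i
        refine Fin.lastCases ?_ (fun j => ?_) i
        · rw [Fin.snoc_last]; exact hn1
        · rw [Fin.snoc_castSucc]; exact hD1 j
      · intro i j hij
        rcases Fin.eq_castSucc_or_eq_last j with ⟨j', rfl⟩ | rfl
        · rcases Fin.eq_castSucc_or_eq_last i with ⟨i', rfl⟩ | rfl
          · rw [Fin.snoc_castSucc, Fin.snoc_castSucc]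
            exact hchain i' j' (Fin.castSucc_le_castSucc_iff.mp hij)
          · exact absurd hij (not_le.mpr (Fin.castSucc_lt_last j'))
        · rcases Fin.eq_castSucc_or_eq_last i with ⟨i', rfl⟩ | rfl
          · rw [Fin.snoc_castSucc, Fin.snoc_last]; exact hDn i'
          · exact dvd_rfl
      · intro i
        refine Fin.lastCases ?_ (fun j => ?_) i
        · rw [Fin.snoc_last]; exact hnd
        · rw [Fin.snoc_castSucc]; exact hDd j
      · -- the equivalence
        let Q : Fin (k + 1) → Type := fun i => ZMod (Fin.snoc (α := fun _ => ℕ) D n i) × ZMod (Fin.snoc (α := fun _ => ℕ) D n i)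
        let cj : (j : Fin k) → (ZMod (D j) × ZMod (D j)) ≃+ Q j.castSucc := fun j =>
          AddEquiv.prodCongr (ZMod.ringEquivCongr (hcast j)).toAddEquiv
            (ZMod.ringEquivCongr (hcast j)).toAddEquiv
        let clast : (ZMod n × ZMod n) ≃+ Q (Fin.last k) :=
          AddEquiv.prodCongr (ZMod.ringEquivCongr hlastc).toAddEquiv
            (ZMod.ringEquivCongr hlastc).toAddEquiv
        let efin : M ≃+ ((i : Fin (k + 1)) → Q i) :=
          E.trans ((AddEquiv.prodCongr clast (e'.trans (AddEquiv.piCongrRight cj))).trans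
            (snocAddEquiv Q))
        refine ⟨efin, ?_⟩
        intro m m'
        have heL : ∀ mm : M, efin mm (Fin.last k) = clast (p mm, q mm) := fun mm =>
          snocAddEquiv_last Q _
        have heC : ∀ (mm : M) (j : Fin k),
            efin mm j.castSucc = cj j (e' ⟨r mm, hrmem mm⟩ j) := fun mm j =>
          snocAddEquiv_castSucc Q _ j
        have hb := hform' ⟨r m, hrmem m⟩ ⟨r m', hrmem m'⟩
        rw [hφ'app] at hb
        rw [Fin.sum_univ_castSucc]
        have hterm : ∀ j : Fin k,
            ((d / Fin.snoc (α := fun _ => ℕ) D n j.castSucc : ℕ) : ZMod d) *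
              (((efin m j.castSucc).1.val : ZMod d) * ((efin m' j.castSucc).2.val : ZMod d)
                - ((efin m' j.castSucc).1.val : ZMod d) * ((efin m j.castSucc).2.val : ZMod d))
            = ((d / D j : ℕ) : ZMod d) *
              (((e' ⟨r m, hrmem m⟩ j).1.val : ZMod d) * ((e' ⟨r m', hrmem m'⟩ j).2.val : ZMod d)
                - ((e' ⟨r m', hrmem m'⟩ j).1.val : ZMod d)
                  * ((e' ⟨r m, hrmem m⟩ j).2.val : ZMod d)) := by
          intro j
          have hv : ∀ y : ZMod (D j) × ZMod (D j),
              (cj j y).1.val = y.1.val ∧ (cj j y).2.val = y.2.val := fun y =>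
            ⟨ZMod.ringEquivCongr_val _ _, ZMod.ringEquivCongr_val _ _⟩
          rw [heC m j, heC m' j, (hv _).1, (hv _).2, (hv _).1, (hv _).2, Fin.snoc_castSucc]
        have hlast : ((d / Fin.snoc (α := fun _ => ℕ) D n (Fin.last k) : ℕ) : ZMod d) *
            (((efin m (Fin.last k)).1.val : ZMod d) * ((efin m' (Fin.last k)).2.val : ZMod d)
              - ((efin m' (Fin.last k)).1.val : ZMod d)
                * ((efin m (Fin.last k)).2.val : ZMod d))
            = δ * (((p m).val : ZMod d) * ((q m').val : ZMod d)
              - ((p m').val : ZMod d) * ((q m).val : ZMod d)) := by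
          have hv : ∀ y : ZMod n × ZMod n,
              (clast y).1.val = y.1.val ∧ (clast y).2.val = y.2.val := fun y =>
            ⟨ZMod.ringEquivCongr_val _ _, ZMod.ringEquivCongr_val _ _⟩
          rw [heL m, heL m', (hv _).1, (hv _).2, (hv _).1, (hv _).2, Fin.snoc_last]
        rw [Finset.sum_congr rfl (fun j _ => hterm j), hlast, hdecomp m m', hb]
        ring

end SympMain


/-- Let `(M, φ)` be a nonzero finite symplectic `ℤ_d`-module.  Then
there exist `k ≥ 1` and positive integers `d₁ ∣ d₂ ∣ … ∣ d_k ∣ d` with `1 < d₁`,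
together with an isomorphism `M ≅ S_{d₁} ⊕ … ⊕ S_{d_k}` of `ℤ_d`-modules carrying `φ`
to the orthogonal direct sum of the elementary symplectic forms.

Since a `ℤ_d`-module structure on an abelian group is unique (it is determined by the
underlying `ℤ`-action), an additive isomorphism between `ℤ_d`-modules is automatically
`ℤ_d`-linear; we therefore state the isomorphism as an `AddEquiv` onto
`Π r, ZMod (D r) × ZMod (D r)`.  The elementary symplectic form on `S_{d₀}` is
`((a,b),(a',b')) ↦ (d/d₀)·(a·b' − a'·b) ∈ ℤ_d`, computed via the canonical lifts
`ZMod.val`. -/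
theorem symplectic_module_elementary_decomposition
    (d : ℕ) [NeZero d]
    (M : Type) [AddCommGroup M] [Module (ZMod d) M] [Finite M] [Nontrivial M]
    (φ : M →ₗ[ZMod d] M →ₗ[ZMod d] ZMod d)
    (halt : ∀ m : M, φ m m = 0)
    (hsymp : ∀ m₀ : M, (∀ m : M, φ m₀ m = 0) → m₀ = 0) :
    ∃ (k : ℕ) (D : Fin k → ℕ),
      0 < k ∧
      (∀ i : Fin k, 1 < D i) ∧
      (∀ i j : Fin k, i ≤ j → D i ∣ D j) ∧
      (∀ i : Fin k, D i ∣ d) ∧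
      ∃ e : M ≃+ ((i : Fin k) → ZMod (D i) × ZMod (D i)),
        ∀ m m' : M,
          φ m m' =
            ∑ i : Fin k,
              ((d / D i : ℕ) : ZMod d) *
                (((e m i).1.val : ZMod d) * ((e m' i).2.val : ZMod d)
                  - ((e m' i).1.val : ZMod d) * ((e m i).2.val : ZMod d)) := by
  exact SympMain.main d (Nat.card M) M le_rfl φ halt hsymp
end

section
/- Let (M,φ) be a finite symplectic ℤ_d-module. Then there exists a finite ℤ_d-module L and a ℤ_d-linear isomorphism M ≅ L ⊕ L*, where L* = Hom_{ℤ_d}(L, ℤ_d), under which φ corresponds to the form ((l₁,l₁'),(l₂,l₂')) ↦ l₁'(l₂) − l₂'(l₁). -/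
/-- The data of a Lagrangian decomposition of a finite `ℤ_d`-module `M` with an
alternating form `φ`: a finite `d`-torsion abelian group `L` (equivalently, a finite
`ℤ_d`-module) together with an isomorphism `M ≅ L ⊕ L*` under which `φ` corresponds to
the form `((l₁,l₁'),(l₂,l₂')) ↦ l₁'(l₂) − l₂'(l₁)`.

Since a `ℤ_d`-module structure on an abelian group is unique (determined by the
underlying `ℤ`-action), additive homomorphisms/isomorphisms between `ℤ_d`-modules are
automatically `ℤ_d`-linear; in particular `Hom_{ℤ_d}(L, ℤ_d) = (L →+ ZMod d)` and the
`ℤ_d`-linear isomorphism is stated as an `AddEquiv`. -/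
structure LagrangianDualDecomp (d : ℕ) (M : Type) [AddCommGroup M] [Module (ZMod d) M]
    (φ : M →ₗ[ZMod d] M →ₗ[ZMod d] ZMod d) : Type 1 where
  L : Type
  [grp : AddCommGroup L]
  [fin : Finite L]
  torsion : ∀ x : L, d • x = 0
  equiv : M ≃+ L × (L →+ ZMod d)
  compat : ∀ m m' : M,
    φ m m' = (equiv m).2 (equiv m').1 - (equiv m').2 (equiv m).1



lemma zmodHom_ext' {e : ℕ} {A : Type*} [AddCommGroup A] (f g : ZMod e →+ A)
    (h : f 1 = g 1) : f = g := by
  ext t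
  obtain ⟨z, rfl⟩ := ZMod.intCast_surjective t
  have h1 : ((z : ℤ) : ZMod e) = z • (1 : ZMod e) := by
    rw [zsmul_eq_mul, mul_one]
  rw [h1, map_zsmul, map_zsmul, h]

open AddSubgroup in
lemma torsion_mem_zmultiples {d e : ℕ} [NeZero d] (he : e ∣ d) {c : ZMod d}
    (hc : addOrderOf c = e) {v : ZMod d} (hv : e • v = 0) :
    v ∈ zmultiples c := by
  have hd0 : d ≠ 0 := NeZero.ne d
  have he0 : e ≠ 0 := by rintro rfl; exact hd0 (zero_dvd_iff.mp he)
  obtain ⟨q, hq⟩ := he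
  have hq0 : q ≠ 0 := by rintro rfl; simp at hq; exact hd0 hq
  have hqd : q ∣ d := ⟨e, by rw [hq, mul_comm]⟩
  set c₀ : ZMod d := (q : ZMod d) with hc₀
  have hc₀ord : addOrderOf c₀ = e := by
    rw [hc₀, ZMod.addOrderOf_coe q hd0, Nat.gcd_eq_right hqd, hq, Nat.mul_div_cancel _
      (Nat.pos_of_ne_zero hq0)]
  have step : ∀ u : ZMod d, e • u = 0 → u ∈ zmultiples c₀ := by
    intro u hu
    have hval : (u.val : ZMod d) = u := ZMod.natCast_zmod_val u
    have h2 : ((e * u.val : ℕ) : ZMod d) = 0 := by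
      push_cast
      rw [← nsmul_eq_mul, hval, hu]
    have hdvd : d ∣ e * u.val := (ZMod.natCast_eq_zero_iff _ _).mp h2
    have hdvd' : e * q ∣ e * u.val := by rw [← hq]; exact hdvd
    have hqdvd : q ∣ u.val := Nat.dvd_of_mul_dvd_mul_left (Nat.pos_of_ne_zero he0) hdvd'
    obtain ⟨t, ht⟩ := hqdvd
    refine mem_zmultiples_iff.mpr ⟨(t : ℤ), ?_⟩
    rw [← hval, ht]
    push_cast
    rw [zsmul_eq_mul]
    push_cast
    ring
  have hcmem : c ∈ zmultiples c₀ := step c (by rw [← hc]; exact addOrderOf_nsmul_eq_zero c)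
  have hle : zmultiples c ≤ zmultiples c₀ := (zmultiples_le).mpr hcmem
  have hcards : Nat.card (zmultiples c₀) ≤ Nat.card (zmultiples c) := by
    rw [Nat.card_zmultiples, Nat.card_zmultiples, hc, hc₀ord]
  have heq : zmultiples c = zmultiples c₀ := AddSubgroup.eq_of_le_of_card_ge hle hcards
  rw [heq]
  exact step v hv

def coprodAddEquiv (A B C : Type*) [AddCommGroup A] [AddCommGroup B] [AddCommGroup C] :
    ((A →+ C) × (B →+ C)) ≃+ (A × B →+ C) where
  toFun p := p.1.coprod p.2
  invFun f := (f.comp (AddMonoidHom.inl A B), f.comp (AddMonoidHom.inr A B))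
  left_inv p := by ext <;> simp
  right_inv f := by ext <;> simp
  map_add' p q := by
    ext u
    simp [AddMonoidHom.coprod_apply]
    abel

@[simp] lemma coprodAddEquiv_apply {A B C : Type*} [AddCommGroup A] [AddCommGroup B]
    [AddCommGroup C] (p : (A →+ C) × (B →+ C)) (u : A × B) :
    coprodAddEquiv A B C p u = p.1 u.1 + p.2 u.2 := rfl

set_option maxHeartbeats 3200000 in
theorem lagrangian_aux (d : ℕ) [NeZero d] :
    ∀ (n : ℕ) (M : Type) [AddCommGroup M] [Module (ZMod d) M] [Finite M]
      (φ : M →ₗ[ZMod d] M →ₗ[ZMod d] ZMod d),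
      Nat.card M ≤ n →
      (∀ m : M, φ m m = 0) →
      (∀ m₀ : M, (∀ m : M, φ m₀ m = 0) → m₀ = 0) →
      Nonempty (LagrangianDualDecomp d M φ) := by
  intro n
  induction n with
  | zero =>
    intro M _ _ _ φ hn _ _
    haveI : Nonempty M := ⟨0⟩
    have := Nat.card_pos (α := M)
    omega
  | succ n ih =>
    intro M _ _ _ φ hn halt hsymp
    rcases subsingleton_or_nontrivial M with hM | hM
    · -- trivial module
      haveI : Subsingleton (PUnit →+ ZMod d) :=
        ⟨fun f g => AddMonoidHom.ext fun u => by
          rw [Subsingleton.elim u 0, map_zero, map_zero]⟩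
      have hz : ∀ (f : PUnit →+ ZMod d) (u : PUnit), f u = 0 := fun f u => by
        rw [Subsingleton.elim u 0, map_zero]
      refine ⟨{ L := PUnit
                torsion := fun u => Subsingleton.elim _ _
                equiv :=
                  { toFun := fun _ => 0
                    invFun := fun _ => 0
                    left_inv := fun m => Subsingleton.elim _ _
                    right_inv := fun p => Subsingleton.elim _ _
                    map_add' := fun _ _ => Subsingleton.elim _ _ }
                compat := ?_ }⟩
      intro m m'
      rw [Subsingleton.elim m 0, map_zero, LinearMap.zero_apply, hz, hz, sub_zero]
    · -- nontrivial module: split off a hyperbolic plane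
      haveI hEE : AddMonoid.ExponentExists M := AddMonoid.ExponentExists.of_finite
      set e := AddMonoid.exponent M with he_def
      have he0 : e ≠ 0 := hEE.exponent_ne_zero
      haveI : NeZero e := ⟨he0⟩
      have hesmul : ∀ m : M, e • m = 0 := fun m => AddMonoid.exponent_nsmul_eq_zero m
      obtain ⟨x, hx⟩ := AddMonoid.exists_addOrderOf_eq_exponent hEE
      rw [← he_def] at hx
      have hed : e ∣ d := by
        rw [he_def, AddMonoid.exponent_dvd_iff_forall_nsmul_eq_zero]
        intro m
        have h1 : ((d : ℕ) : ZMod d) • m = d • m := Nat.cast_smul_eq_nsmul (ZMod d) d m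
        rw [← h1, ZMod.natCast_self, zero_smul]
      have he1 : e ≠ 1 := by
        obtain ⟨m₀, hm₀⟩ := exists_ne (0 : M)
        intro h
        have hdv : addOrderOf m₀ ∣ e := AddMonoid.addOrder_dvd_exponent m₀
        rw [h, Nat.dvd_one, AddMonoid.addOrderOf_eq_one_iff] at hdv
        exact hm₀ hdv
      -- bilinearity helpers
      have happ₁ : ∀ (k : ℕ) (u m : M), φ (k • u) m = k • φ u m := by
        intro k u m
        have h1 : φ.flip m (k • u) = k • φ.flip m u := map_nsmul (φ.flip m) k u
        rwa [LinearMap.flip_apply, LinearMap.flip_apply] at h1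
      have happ₁z : ∀ (k : ℤ) (u m : M), φ (k • u) m = k • φ u m := by
        intro k u m
        have h1 : φ.flip m (k • u) = k • φ.flip m u := map_zsmul (φ.flip m) k u
        rwa [LinearMap.flip_apply, LinearMap.flip_apply] at h1
      -- antisymmetry
      have hskew : ∀ m m' : M, φ m' m = - φ m m' := by
        intro m m'
        have h := halt (m + m')
        simp only [map_add, LinearMap.add_apply, halt m, halt m', zero_add, add_zero] at h
        have h2 : φ m' m + φ m m' = 0 := by linear_combination h
        exact eq_neg_of_add_eq_zero_left h2
      -- find a partner y for x
      obtain ⟨g, hg⟩ := IsAddCyclic.exists_generator (α := (φ x).toAddMonoidHom.range)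
      obtain ⟨y, hy'⟩ := AddMonoidHom.mem_range.mp g.2
      have hy : φ x y = (g : ZMod d) := hy'
      set c : ZMod d := (g : ZMod d) with hc_def
      have hcx : addOrderOf c • x = 0 := by
        apply hsymp
        intro m
        have hmem : φ x m ∈ (φ x).toAddMonoidHom.range := ⟨m, rfl⟩
        obtain ⟨k, hk⟩ := AddSubgroup.mem_zmultiples_iff.mp (hg ⟨φ x m, hmem⟩)
        have hk' : k • c = φ x m := congrArg Subtype.val hk
        rw [happ₁, ← hk', smul_comm, addOrderOf_nsmul_eq_zero, smul_zero]
      have hcord : addOrderOf c = e := by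
        have h1 : e ∣ addOrderOf c := by
          rw [← hx]; exact addOrderOf_dvd_of_nsmul_eq_zero hcx
        have h2 : addOrderOf c ∣ e := by
          apply addOrderOf_dvd_of_nsmul_eq_zero
          rw [← hy, ← map_nsmul, hesmul y, map_zero]
        exact Nat.dvd_antisymm h2 h1
      have hce : e • c = 0 := by rw [← hcord]; exact addOrderOf_nsmul_eq_zero c
      -- the scalar maps
      set cH : ZMod e →+ ZMod d := ZMod.lift e ⟨zmultiplesHom (ZMod d) c,
        by rw [zmultiplesHom_apply, natCast_zsmul]; exact hce⟩ with hcHdef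
      have hcH : ∀ z : ℤ, cH ((z : ℤ) : ZMod e) = z • c := fun z => by
        rw [hcHdef, ZMod.lift_coe]; rfl
      set sx : ZMod e →+ M := ZMod.lift e ⟨zmultiplesHom M x,
        by rw [zmultiplesHom_apply, natCast_zsmul]; exact hesmul x⟩ with hsxdef
      have hsx : ∀ z : ℤ, sx ((z : ℤ) : ZMod e) = z • x := fun z => by
        rw [hsxdef, ZMod.lift_coe]; rfl
      set sy : ZMod e →+ M := ZMod.lift e ⟨zmultiplesHom M y,
        by rw [zmultiplesHom_apply, natCast_zsmul]; exact hesmul y⟩ with hsydef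
      have hsy : ∀ z : ℤ, sy ((z : ℤ) : ZMod e) = z • y := fun z => by
        rw [hsydef, ZMod.lift_coe]; rfl
      have hcHinj : ∀ t : ZMod e, cH t = 0 → t = 0 := by
        intro t ht
        obtain ⟨z, rfl⟩ := ZMod.intCast_surjective t
        rw [hcH] at ht
        have hdvd : (addOrderOf c : ℤ) ∣ z := addOrderOf_dvd_iff_zsmul_eq_zero.mpr ht
        rw [hcord] at hdvd
        exact (ZMod.intCast_zmod_eq_zero_iff_dvd z e).mpr hdvd
      -- the orthogonal complement of the hyperbolic plane
      set W : Submodule (ZMod d) M := LinearMap.ker (φ x) ⊓ LinearMap.ker (φ y) with hWdef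
      have hWmem : ∀ w : M, w ∈ W ↔ φ x w = 0 ∧ φ y w = 0 := fun w => by
        rw [hWdef, Submodule.mem_inf, LinearMap.mem_ker, LinearMap.mem_ker]
      -- evaluation lemmas
      have hφxx : ∀ t s : ZMod e, φ (sx t) (sx s) = 0 := by
        intro t s
        obtain ⟨z, rfl⟩ := ZMod.intCast_surjective t
        obtain ⟨z', rfl⟩ := ZMod.intCast_surjective s
        rw [hsx, hsx, happ₁z, map_zsmul, halt x, smul_zero, smul_zero]
      have hφyy : ∀ t s : ZMod e, φ (sy t) (sy s) = 0 := by
        intro t s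
        obtain ⟨z, rfl⟩ := ZMod.intCast_surjective t
        obtain ⟨z', rfl⟩ := ZMod.intCast_surjective s
        rw [hsy, hsy, happ₁z, map_zsmul, halt y, smul_zero, smul_zero]
      have hφxy : ∀ t s : ZMod e, φ (sx t) (sy s) = cH (t * s) := by
        intro t s
        obtain ⟨z, rfl⟩ := ZMod.intCast_surjective t
        obtain ⟨z', rfl⟩ := ZMod.intCast_surjective s
        rw [hsx, hsy, happ₁z, map_zsmul, hy, ← Int.cast_mul, hcH, smul_smul]
      have hφyx : ∀ t s : ZMod e, φ (sy t) (sx s) = - cH (t * s) := by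
        intro t s
        obtain ⟨z, rfl⟩ := ZMod.intCast_surjective t
        obtain ⟨z', rfl⟩ := ZMod.intCast_surjective s
        rw [hsy, hsx, happ₁z, map_zsmul, hskew x y, hy, ← Int.cast_mul, hcH,
          smul_neg, smul_neg, smul_smul]
      have hx1 : sx (1 : ZMod e) = x := by
        have h := hsx 1; rwa [Int.cast_one, one_zsmul] at h
      have hy1 : sy (1 : ZMod e) = y := by
        have h := hsy 1; rwa [Int.cast_one, one_zsmul] at h
      have hφxsy : ∀ s : ZMod e, φ x (sy s) = cH s := fun s => by
        rw [← hx1, hφxy, one_mul]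
      have hφxsx : ∀ s : ZMod e, φ x (sx s) = 0 := fun s => by
        rw [← hx1, hφxx]
      have hφysx : ∀ s : ZMod e, φ y (sx s) = - cH s := fun s => by
        rw [← hy1, hφyx, one_mul]
      have hφysy : ∀ s : ZMod e, φ y (sy s) = 0 := fun s => by
        rw [← hy1, hφyy]
      have hφsxW : ∀ (t : ZMod e) (w : W), φ (sx t) (w : M) = 0 := by
        intro t w
        obtain ⟨z, rfl⟩ := ZMod.intCast_surjective t
        rw [hsx, happ₁z, ((hWmem (w : M)).mp w.2).1, smul_zero]
      have hφsyW : ∀ (t : ZMod e) (w : W), φ (sy t) (w : M) = 0 := by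
        intro t w
        obtain ⟨z, rfl⟩ := ZMod.intCast_surjective t
        rw [hsy, happ₁z, ((hWmem (w : M)).mp w.2).2, smul_zero]
      have hφWsx : ∀ (w : W) (t : ZMod e), φ (w : M) (sx t) = 0 := by
        intro w t
        rw [hskew (sx t) (w : M), hφsxW, neg_zero]
      have hφWsy : ∀ (w : W) (t : ZMod e), φ (w : M) (sy t) = 0 := by
        intro w t
        rw [hskew (sy t) (w : M), hφsyW, neg_zero]
      -- the decomposition map
      set F : (ZMod e × ZMod e) × W →+ M :=
        { toFun := fun p => sx p.1.2 + sy p.1.1 + (p.2 : M)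
          map_zero' := by simp
          map_add' := by
            intro p q
            simp only [Prod.fst_add, Prod.snd_add, map_add, Submodule.coe_add]
            abel } with hFdef
      have hFapp : ∀ p : (ZMod e × ZMod e) × W, F p = sx p.1.2 + sy p.1.1 + (p.2 : M) :=
        fun p => rfl
      have hFinj : Function.Injective F := by
        rw [injective_iff_map_eq_zero]
        rintro ⟨⟨a, b⟩, w⟩ hp
        rw [hFapp] at hp
        simp only at hp
        have ha : a = 0 := by
          apply hcHinj
          have h0 : φ x (sx b + sy a + (w : M)) = 0 := by rw [hp, map_zero]
          rwa [map_add, map_add, hφxsx, hφxsy, ← hx1, hφsxW, zero_add, add_zero] at h0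
        have hb : b = 0 := by
          apply hcHinj
          have h0 : φ y (sx b + sy a + (w : M)) = 0 := by rw [hp, map_zero]
          rw [map_add, map_add, hφysx, hφysy, ← hy1, hφsyW, add_zero, add_zero] at h0
          rw [← neg_eq_zero]
          exact h0
        rw [ha, hb, map_zero, map_zero, zero_add, zero_add] at hp
        have hw : w = 0 := by
          exact Subtype.ext hp
        rw [ha, hb, hw]
        rfl
      have hFsurj : Function.Surjective F := by
        intro m
        have htx : e • φ x m = 0 := by rw [← map_nsmul, hesmul m, map_zero]
        obtain ⟨k, hk⟩ := AddSubgroup.mem_zmultiples_iff.mp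
          (torsion_mem_zmultiples hed hcord htx)
        have hty : e • φ y m = 0 := by rw [← map_nsmul, hesmul m, map_zero]
        obtain ⟨k', hk'⟩ := AddSubgroup.mem_zmultiples_iff.mp
          (torsion_mem_zmultiples hed hcord hty)
        have hwmem : m - sx ((-k' : ℤ) : ZMod e) - sy ((k : ℤ) : ZMod e) ∈ W := by
          rw [hWmem]
          constructor
          · rw [map_sub, map_sub, hφxsx, hφxsy, hcH, sub_zero, ← hk, sub_self]
          · rw [map_sub, map_sub, hφysx, hφysy, hcH, sub_zero, ← hk', neg_zsmul,
              neg_neg, sub_self]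
        refine ⟨((((k : ℤ) : ZMod e), ((-k' : ℤ) : ZMod e)),
          ⟨m - sx ((-k' : ℤ) : ZMod e) - sy ((k : ℤ) : ZMod e), hwmem⟩), ?_⟩
        rw [hFapp]
        simp only
        abel
      set E₁ : M ≃+ (ZMod e × ZMod e) × W :=
        (AddEquiv.ofBijective F ⟨hFinj, hFsurj⟩).symm with hE₁def
      have hE₁F : ∀ m : M, F (E₁ m) = m := fun m =>
        (AddEquiv.ofBijective F ⟨hFinj, hFsurj⟩).apply_symm_apply m
      -- cardinality bound for the recursion
      have hcardW : Nat.card W ≤ n := by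
        have h1 : Nat.card M = e * e * Nat.card W := by
          rw [Nat.card_congr E₁.toEquiv, Nat.card_prod, Nat.card_prod, Nat.card_zmod]
        have hWpos : 0 < Nat.card W := Nat.card_pos
        have he2 : 2 ≤ e := by omega
        have h2 : 1 < e * e := by nlinarith
        have hlt : Nat.card W < Nat.card M := by
          rw [h1]
          exact (Nat.lt_mul_iff_one_lt_left hWpos).mpr h2
        omega
      -- restricted form
      set φW : W →ₗ[ZMod d] W →ₗ[ZMod d] ZMod d := φ.compl₁₂ W.subtype W.subtype with hφWdef
      have hφWapp : ∀ w w' : W, φW w w' = φ (w : M) (w' : M) := fun _ _ => rfl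
      have hWalt : ∀ w : W, φW w w = 0 := fun w => halt (w : M)
      have hWsymp : ∀ w₀ : W, (∀ w : W, φW w₀ w = 0) → w₀ = 0 := by
        intro w₀ h
        have h0 : (w₀ : M) = 0 := by
          apply hsymp
          intro m
          obtain ⟨p, rfl⟩ := hFsurj m
          rw [hFapp, map_add, map_add, hφWsx, hφWsy, zero_add, zero_add]
          exact h p.2
        exact Subtype.ext h0
      obtain ⟨D⟩ := ih W φW hcardW hWalt hWsymp
      letI : AddCommGroup D.L := D.grp
      letI : Finite D.L := D.fin
      -- the duality ZMod e ≃+ (ZMod e →+ ZMod d)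
      set P : ZMod e →+ (ZMod e →+ ZMod d) :=
        { toFun := fun b => cH.comp (AddMonoidHom.mulRight b)
          map_zero' := by ext t; simp
          map_add' := by intro b b'; ext t; simp [mul_add] } with hPdef
      have hPapp : ∀ b t : ZMod e, P b t = cH (t * b) := fun _ _ => rfl
      have hPbij : Function.Bijective P := by
        constructor
        · rw [injective_iff_map_eq_zero]
          intro b hb
          have h1 : cH (1 * b) = 0 := by rw [← hPapp, hb]; rfl
          rw [one_mul] at h1
          exact hcHinj b h1
        · intro f
          have hf1 : e • f 1 = 0 := by
            rw [← map_nsmul]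
            have h1 : e • (1 : ZMod e) = 0 := by
              rw [nsmul_eq_mul, mul_one, ZMod.natCast_self]
            rw [h1, map_zero]
          obtain ⟨z, hz⟩ := AddSubgroup.mem_zmultiples_iff.mp
            (torsion_mem_zmultiples hed hcord hf1)
          refine ⟨((z : ℤ) : ZMod e), zmodHom_ext' _ _ ?_⟩
          rw [hPapp, one_mul, hcH, hz]
      set ρ : ZMod e ≃+ (ZMod e →+ ZMod d) := AddEquiv.ofBijective P hPbij with hρdef
      have hρ : ∀ b : ZMod e, ρ b = P b := fun _ => rfl
      set CP := coprodAddEquiv (ZMod e) D.L (ZMod d) with hCPdef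
      set E₃ : (ZMod e × (D.L →+ ZMod d)) ≃+ ((ZMod e × D.L) →+ ZMod d) :=
        (AddEquiv.prodCongr ρ (AddEquiv.refl _)).trans CP with hE₃def
      set Efin : M ≃+ (ZMod e × D.L) × ((ZMod e × D.L) →+ ZMod d) :=
        E₁.trans ((AddEquiv.prodCongr (AddEquiv.refl _) D.equiv).trans
          ((AddEquiv.prodProdProdComm (ZMod e) (ZMod e) D.L (D.L →+ ZMod d)).trans
            (AddEquiv.prodCongr (AddEquiv.refl _) E₃))) with hEfindef
      have hEfin : ∀ m : M, Efin m =
          (((E₁ m).1.1, (D.equiv (E₁ m).2).1),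
            CP (ρ (E₁ m).1.2, (D.equiv (E₁ m).2).2)) := fun m => rfl
      refine ⟨{ L := ZMod e × D.L
                torsion := ?_
                equiv := Efin
                compat := ?_ }⟩
      · rintro ⟨t, l⟩
        have h1 : d • t = 0 := by
          rw [nsmul_eq_mul, (ZMod.natCast_eq_zero_iff d e).mpr hed, zero_mul]
        have h2 : d • l = 0 := D.torsion l
        show (d • t, d • l) = 0
        rw [h1, h2]
        rfl
      · intro m m'
        have hww : φ ((E₁ m).2 : M) ((E₁ m').2 : M) =
            (D.equiv (E₁ m).2).2 (D.equiv (E₁ m').2).1 -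
              (D.equiv (E₁ m').2).2 (D.equiv (E₁ m).2).1 :=
          (hφWapp _ _).symm.trans (D.compat _ _)
        rw [hEfin m, hEfin m']
        conv_lhs => rw [← hE₁F m, ← hE₁F m']
        rw [hFapp, hFapp]
        simp only [map_add, LinearMap.add_apply, hφxx, hφxy, hφyx, hφyy, hφsxW, hφsyW,
          hφWsx, hφWsy, hww, hCPdef, coprodAddEquiv_apply, hρ, hPapp]
        ring_nf

/-- Let `(M, φ)` be a finite symplectic `ℤ_d`-module.  Then there
exists a finite `ℤ_d`-module `L` and a `ℤ_d`-linear isomorphism `M ≅ L ⊕ L*`, where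
`L* = Hom_{ℤ_d}(L, ℤ_d)`, under which `φ` corresponds to the form
`((l₁,l₁'),(l₂,l₂')) ↦ l₁'(l₂) − l₂'(l₁)`. -/
theorem symplectic_module_lagrangian_decomposition
    (d : ℕ) [NeZero d]
    (M : Type) [AddCommGroup M] [Module (ZMod d) M] [Finite M]
    (φ : M →ₗ[ZMod d] M →ₗ[ZMod d] ZMod d)
    (halt : ∀ m : M, φ m m = 0)
    (hsymp : ∀ m₀ : M, (∀ m : M, φ m₀ m = 0) → m₀ = 0) :
    Nonempty (LagrangianDualDecomp d M φ) := by
  exact lagrangian_aux d (Nat.card M) M φ le_rfl halt hsymp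
end

section
/- Let M be a finite ℤ_d-module with an alternating form φ. Then the following are equivalent: (a) M is a free ℤ_d-module and φ is symplectic; (b) M admits a symplectic basis, i.e. a ℤ_d-basis (e₁,…,e_n,f₁,…,f_n) with φ(e_i,e_j) = φ(f_i,f_j) = 0 and φ(e_i,f_j) = δ_{ij} for all i,j ∈ {1,…,n}. -/
/-!
A nondegenerate form identifies the finite free module `M` with its dual (an injective map
between finite sets of the same size), so some `e, f` satisfy `φ e f = 1`. Then
`M = span {e, f} ⊕ {e, f}ᗮ` and `φ` stays nondegenerate on `{e, f}ᗮ`. This complement is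
projective of constant rank `rank M - 2` at every prime, hence free because `ℤ_d` is semilocal,
and induction on `|M|` finishes. Conversely, the coordinates of `x` in a symplectic basis are
`φ x f_j` and `φ e_j x`, so `x = 0` as soon as `φ x = 0`.
-/

open Module Submodule

namespace Module

variable {R M : Type*} [CommRing R] [Finite (MaximalSpectrum R)] [AddCommGroup M] [Module R M]

theorem free_of_rankAtStalk_eq [Module.Finite R M] [Flat R M] (n : ℕ)
    (h : ∀ p, rankAtStalk (R := R) M p = n) : Free R M := by
  refine free_of_flat_of_finrank_eq R M n fun P ↦ ?_
  -- `(R ⧸ P) ⊗ M` is free over the field `R ⧸ P`; its rank at `⊥` is the rank of `M` at `P`.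
  let := Ideal.Quotient.field P.asIdeal
  let p : PrimeSpectrum (R ⧸ P.asIdeal) := ⟨⊥, Ideal.isPrime_bot⟩
  rw [← h (PrimeSpectrum.comap (algebraMap R _) p), ← rankAtStalk_baseChange p,
    rankAtStalk_eq_finrank_of_free, Pi.natCast_apply, Nat.cast_id]

theorem Free.of_isCompl [Free R M] [Module.Finite R M] {W N : Submodule R M} (h : IsCompl W N)
    [Free R W] : Free R N := by
  have : Projective R N := .of_split N.subtype _ (Submodule.projectionOnto_comp_subtype h.symm)
  have : Module.Finite R W := .of_surjective _ (W.projectionOnto_surjective h)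
  have : Module.Finite R N := .of_surjective _ (N.projectionOnto_surjective h.symm)
  refine free_of_rankAtStalk_eq (finrank R M - finrank R W) fun p ↦ ?_
  have hsum := congrFun (rankAtStalk_prod W N) p
  rw [rankAtStalk_eq_of_equiv (W.prodEquivOfIsCompl N h)] at hsum
  simp only [rankAtStalk_eq_finrank_of_free, Pi.add_apply, Pi.natCast_apply, Nat.cast_id] at hsum
  omega

end Module

namespace LinearMap

variable {R M : Type*} [CommRing R] [AddCommGroup M] [Module R M]

structure IsSymplecticFamily {ι : Type*} [DecidableEq ι] (B : M →ₗ[R] M →ₗ[R] R)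
    (v : ι ⊕ ι → M) : Prop where
  inl_inl (i j : ι) : B (v (.inl i)) (v (.inl j)) = 0
  inr_inr (i j : ι) : B (v (.inr i)) (v (.inr j)) = 0
  inl_inr (i j : ι) : B (v (.inl i)) (v (.inr j)) = if i = j then 1 else 0

variable {B : M →ₗ[R] M →ₗ[R] R}

namespace IsSymplecticFamily

variable {ι : Type*} [Fintype ι] [DecidableEq ι] {v : ι ⊕ ι → M}

theorem apply_sum_inr (hv : B.IsSymplecticFamily v) (g : ι ⊕ ι → R) (j : ι) :
    B (∑ k, g k • v k) (v (.inr j)) = g (.inl j) := by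
  simp [Fintype.sum_sum_type, hv.inl_inr, hv.inr_inr]

theorem apply_inl_sum (hv : B.IsSymplecticFamily v) (g : ι ⊕ ι → R) (j : ι) :
    B (v (.inl j)) (∑ k, g k • v k) = g (.inr j) := by
  simp [Fintype.sum_sum_type, hv.inl_inl, hv.inl_inr]

theorem linearIndependent (hv : B.IsSymplecticFamily v) : LinearIndependent R v := by
  refine Fintype.linearIndependent_iff.mpr fun g hg ↦ ?_
  rintro (j | j)
  · rw [← hv.apply_sum_inr g j, hg, map_zero, zero_apply]
  · rw [← hv.apply_inl_sum g j, hg, map_zero]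

theorem separatingLeft (hB : B.IsAlt) {b : Basis (ι ⊕ ι) R M}
    (hb : B.IsSymplecticFamily b) : B.SeparatingLeft := by
  intro x hx
  refine b.forall_coord_eq_zero_iff.mp fun k ↦ ?_
  rw [← b.sum_repr x] at hx
  rcases k with j | j
  · rw [Basis.coord_apply, ← hb.apply_sum_inr (b.repr x) j, hx]
  · rw [Basis.coord_apply, ← hb.apply_inl_sum (b.repr x) j, ← hB.neg, hx, neg_zero]

end IsSymplecticFamily

theorem IsSymplecticFamily.cons {n : ℕ} {v : Fin n ⊕ Fin n → M} (hv : B.IsSymplecticFamily v)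
    (hB : B.IsAlt) {e f : M} (hef : B e f = 1) (he : ∀ k, B e (v k) = 0)
    (hf : ∀ k, B f (v k) = 0) :
    B.IsSymplecticFamily
      (Sum.elim (Matrix.vecCons e (v ∘ .inl)) (Matrix.vecCons f (v ∘ .inr))) := by
  have hve (k) : B (v k) e = 0 := by rw [← hB.neg, he, neg_zero]
  have hvf (k) : B (v k) f = 0 := by rw [← hB.neg, hf, neg_zero]
  constructor <;> intro i j <;> cases i using Fin.cases <;> cases j using Fin.cases <;>
    simp [hB e, hB f, hef, he, hf, hve, hvf, hv.inl_inl, hv.inr_inr, hv.inl_inr, Fin.succ_ne_zero,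
      fun i ↦ (Fin.succ_ne_zero i).symm]

theorem SeparatingLeft.exists_apply_eq_one [Finite M] [Free R M] [Module.Finite R M]
    [Nontrivial M] (hsep : B.SeparatingLeft) : ∃ e f, B e f = 1 := by
  classical
  let b := Free.chooseBasis R M
  obtain ⟨i⟩ := b.index_nonempty
  have hinj : Function.Injective B := by
    rwa [← ker_eq_bot, ← separatingLeft_iff_ker_eq_bot]
  obtain ⟨e, he⟩ := (Finite.injective_iff_surjective_of_equiv b.toDualEquiv.toEquiv).mp hinj
    (b.coord i)
  exact ⟨e, b i, by simp [he]⟩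

namespace IsAlt

section

variable (hB : B.IsAlt) {e f : M} (hef : B e f = 1)
include hB hef

theorem apply_smul_add_smul (s t : R) :
    B e (s • e + t • f) = t ∧ B f (s • e + t • f) = -s := by
  have hfe : B f e = -1 := by rw [← hB.neg, hef]
  simp [hB e, hB f, hef, hfe]

theorem linearIndependent_pair : LinearIndependent R ![e, f] := by
  refine LinearIndependent.pair_iff.mpr fun s t hst ↦ ?_
  obtain ⟨ht, hs⟩ := hB.apply_smul_add_smul hef s t
  rw [hst, map_zero] at ht hs
  exact ⟨neg_eq_zero.mp hs.symm, ht.symm⟩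

theorem isCompl_span_pair_ker_inf_ker :
    IsCompl (span R {e, f}) (ker (B e) ⊓ ker (B f)) := by
  constructor
  · rw [disjoint_def]
    rintro x hx ⟨hxe, hxf⟩
    obtain ⟨s, t, rfl⟩ := mem_span_pair.mp hx
    obtain ⟨ht, hs⟩ := hB.apply_smul_add_smul hef s t
    rw [mem_ker.mp hxe] at ht
    rw [mem_ker.mp hxf, zero_eq_neg] at hs
    simp [hs, ← ht]
  · rw [codisjoint_iff, eq_top_iff]
    intro x _
    obtain ⟨ht, hs⟩ := hB.apply_smul_add_smul hef (-B f x) (B e x)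
    refine mem_sup.mpr ⟨-B f x • e + B e x • f, mem_span_pair.mpr ⟨_, _, rfl⟩,
      x - (-B f x • e + B e x • f), ⟨?_, ?_⟩, add_sub_cancel _ _⟩
    · rw [SetLike.mem_coe, mem_ker, map_sub, ht, sub_self]
    · rw [SetLike.mem_coe, mem_ker, map_sub, hs, neg_neg, sub_self]

theorem separatingLeft_domRestrict₁₂ (hsep : B.SeparatingLeft) :
    (B.domRestrict₁₂ (ker (B e) ⊓ ker (B f)) (ker (B e) ⊓ ker (B f))).SeparatingLeft := by
  rintro ⟨x, hxe, hxf⟩ hx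
  have hle : span R {e, f} ⊔ (ker (B e) ⊓ ker (B f)) ≤ ker (B x) := by
    refine sup_le (span_le.mpr ?_) fun y hy ↦ hx ⟨y, hy⟩
    rintro y (rfl | rfl)
    · simp [mem_ker, ← hB.neg y x, mem_ker.mp hxe]
    · simp [mem_ker, ← hB.neg y x, mem_ker.mp hxf]
  rw [(hB.isCompl_span_pair_ker_inf_ker hef).sup_eq_top, top_le_iff, ker_eq_top] at hle
  exact Subtype.ext (hsep x fun y ↦ by rw [hle, zero_apply])

theorem exists_isSymplecticFamily_basis_of_ker_inf_ker {n : ℕ}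
    (b : Basis (Fin n ⊕ Fin n) R ↥(ker (B e) ⊓ ker (B f)))
    (hb : IsSymplecticFamily (B.domRestrict₁₂ _ _) b) :
    ∃ b' : Basis (Fin (n + 1) ⊕ Fin (n + 1)) R M, B.IsSymplecticFamily b' := by
  have hv : B.IsSymplecticFamily (Submodule.subtype _ ∘ b) :=
    ⟨hb.inl_inl, hb.inr_inr, hb.inl_inr⟩
  replace hv := hv.cons hB hef (fun k ↦ (b k).2.1) (fun k ↦ (b k).2.2)
  refine ⟨.mk hv.linearIndependent ?_, by rwa [Basis.coe_mk]⟩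
  rw [← (hB.isCompl_span_pair_ker_inf_ker hef).sup_eq_top]
  refine sup_le (span_le.mpr ?_) ?_
  · rintro _ (rfl | rfl)
    exacts [subset_span ⟨.inl 0, rfl⟩, subset_span ⟨.inr 0, rfl⟩]
  · calc _ = (span R (Set.range b)).map (Submodule.subtype _) := by
          rw [b.span_eq, map_subtype_top]
      _ = span R (Set.range (Submodule.subtype _ ∘ b)) := by rw [map_span, Set.range_comp]
      _ ≤ _ := span_mono <| by
        rintro _ ⟨k | k, rfl⟩
        exacts [⟨.inl k.succ, rfl⟩, ⟨.inr k.succ, rfl⟩]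

end

theorem exists_isSymplecticFamily_basis [Finite R] [Module.Finite R M] [Free R M]
    (hB : B.IsAlt) (hsep : B.SeparatingLeft) :
    ∃ (n : ℕ) (b : Basis (Fin n ⊕ Fin n) R M), B.IsSymplecticFamily b := by
  induction hc : Nat.card M using Nat.strong_induction_on generalizing M with | _ c ih =>
  have : Finite M := Module.finite_of_finite R
  rcases subsingleton_or_nontrivial M with hM | hM
  · exact ⟨0, .empty M, ⟨finZeroElim, finZeroElim, finZeroElim⟩⟩
  obtain ⟨e, f, hef⟩ := hsep.exists_apply_eq_one
  have hcompl := hB.isCompl_span_pair_ker_inf_ker hef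
  have : Free R (span R {e, f}) := by
    rw [← Matrix.range_cons_cons_empty e f ![]]
    exact .of_basis (.span (hB.linearIndependent_pair hef))
  have : Free R ↥(ker (B e) ⊓ ker (B f)) := .of_isCompl hcompl
  have : Module.Finite R ↥(ker (B e) ⊓ ker (B f)) := .of_finite
  have hlt : Nat.card ↥(ker (B e) ⊓ ker (B f)) < c := by
    have : Nontrivial R := Module.nontrivial R M
    refine hc ▸ Finite.card_subtype_lt (x := e) fun he ↦ ?_
    have hfe : B f e = 0 := he.2
    rw [← hB.neg, hef, neg_eq_zero] at hfe
    exact one_ne_zero hfe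
  obtain ⟨n, b, hb⟩ := ih _ hlt (B := B.domRestrict₁₂ _ _) (fun x ↦ hB x)
    (hB.separatingLeft_domRestrict₁₂ hef hsep) rfl
  exact ⟨n + 1, hB.exists_isSymplecticFamily_basis_of_ker_inf_ker hef b hb⟩

end IsAlt

end LinearMap

open LinearMap in
/-- Let `M` be a finite `ℤ_d`-module with an alternating form `φ`.
Then the following are equivalent:
(a) `M` is a free `ℤ_d`-module and `φ` is symplectic;
(b) `M` admits a symplectic basis, i.e. a `ℤ_d`-basis `(e₁,…,e_n,f₁,…,f_n)` with
    `φ(e_i,e_j) = φ(f_i,f_j) = 0` and `φ(e_i,f_j) = δ_{ij}`. -/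
theorem free_symplectic_iff_symplectic_basis
    (d : ℕ) [NeZero d]
    (M : Type) [AddCommGroup M] [Module (ZMod d) M] [Finite M]
    (φ : M →ₗ[ZMod d] M →ₗ[ZMod d] ZMod d)
    (halt : ∀ m : M, φ m m = 0) :
    (Module.Free (ZMod d) M ∧ ∀ m₀ : M, (∀ m : M, φ m₀ m = 0) → m₀ = 0) ↔
      (∃ (n : ℕ) (b : Module.Basis (Fin n ⊕ Fin n) (ZMod d) M),
        (∀ i j : Fin n, φ (b (Sum.inl i)) (b (Sum.inl j)) = 0) ∧
        (∀ i j : Fin n, φ (b (Sum.inr i)) (b (Sum.inr j)) = 0) ∧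
        (∀ i j : Fin n, φ (b (Sum.inl i)) (b (Sum.inr j)) = if i = j then 1 else 0)) := by
  have : Module.Finite (ZMod d) M := .of_finite
  constructor
  · rintro ⟨_, hsep⟩
    obtain ⟨n, b, hb⟩ := IsAlt.exists_isSymplecticFamily_basis halt hsep
    exact ⟨n, b, hb.inl_inl, hb.inr_inr, hb.inl_inr⟩
  · rintro ⟨n, b, hb⟩
    exact ⟨.of_basis b, IsSymplecticFamily.separatingLeft halt ⟨hb.1, hb.2.1, hb.2.2⟩⟩
end

section
/- Let M be a finite free ℤ_d-module with a symplectic form φ, and let L ⊆ M be a free isotropic submodule. Then every ℤ_d-basis (e₁,…,e_k) of L can be extended to a symplectic basis (e₁,…,e_n,f₁,…,f_n) of M. -/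
/-!
The basis of `L` is extended one vector at a time. For a symplectic family `(eᵢ, fᵢ)` spanning
`W`, the map `m ↦ m - ∑ φ(eᵢ, m) fᵢ + ∑ φ(fᵢ, m) eᵢ` projects `M` onto `W^⊥` along `W`. A vector
`x` orthogonal to all `eᵢ` whose projection has additive order `d` admits, by nondegeneracy, a
partner `y ∈ W^⊥` with `φ(x, y) = 1`; correcting each `fᵢ` by a multiple of `y` enlarges the
family. The vectors of the basis of `L` qualify because `L` is free and isotropic. Once `L` is
used up, `W^⊥` still contains a vector of order `d` as long as `W ≠ M`: its cardinality
`d ^ (r - 2n)` is divisible by every prime `p ∣ d`, whereas if `W^⊥` were killed by `d / p`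
it would lie in `pM`, so multiplication by `p` would be bijective on `W^⊥`, contradicting
Cauchy's theorem.
-/

open Submodule Set

section SymplecticFamily

variable {R M : Type*} [CommRing R] [AddCommGroup M] [Module R M] {φ : LinearMap.BilinForm R M}
  {ι : Type*} {e f : ι → M}

theorem mem_orthogonal_span_iff {m : M} :
    m ∈ φ.orthogonal (span R (range (Sum.elim e f))) ↔ ∀ i, φ (e i) m = 0 ∧ φ (f i) m = 0 := by
  rw [LinearMap.BilinForm.mem_orthogonal_iff]
  constructor
  · exact fun h i => ⟨h _ (subset_span ⟨Sum.inl i, rfl⟩), h _ (subset_span ⟨Sum.inr i, rfl⟩)⟩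
  · intro h n hn
    refine span_induction ?_ (by simp) (fun x y _ _ hx hy => by simp [hx, hy])
      (fun a x _ hx => by simp [hx]) hn
    rintro _ ⟨i | i, rfl⟩
    exacts [(h i).1, (h i).2]

section Projection

variable [Fintype ι]

variable (φ e f) in
/-- For a symplectic family `(e, f)`, the projection onto the orthogonal of `span (e ∪ f)` along
`span (e ∪ f)`. -/
def symplecticProj : M →ₗ[R] M :=
  LinearMap.id - ∑ i, (φ (e i)).smulRight (f i) + ∑ i, (φ (f i)).smulRight (e i)

theorem symplecticProj_apply (m : M) :
    symplecticProj φ e f m = m - ∑ i, φ (e i) m • f i + ∑ i, φ (f i) m • e i := by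
  simp [symplecticProj]

theorem symplecticProj_eq_self {y : M}
    (hy : y ∈ φ.orthogonal (span R (range (Sum.elim e f)))) : symplecticProj φ e f y = y := by
  simp [symplecticProj_apply, (mem_orthogonal_span_iff.mp hy _).1,
    (mem_orthogonal_span_iff.mp hy _).2]

theorem sub_symplecticProj_mem_span (m : M) :
    m - symplecticProj φ e f m ∈ span R (range (Sum.elim e f)) := by
  rw [symplecticProj_apply, sub_add_eq_sub_sub, sub_sub_cancel]
  exact sub_mem (sum_mem fun i _ => smul_mem _ _ (subset_span ⟨Sum.inr i, rfl⟩))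
    (sum_mem fun i _ => smul_mem _ _ (subset_span ⟨Sum.inl i, rfl⟩))

theorem symplecticProj_sub_mem_span_left {x : M} (hx : ∀ i, φ (e i) x = 0) :
    symplecticProj φ e f x - x ∈ span R (range e) := by
  simp only [symplecticProj_apply, hx, zero_smul, Finset.sum_const_zero, sub_zero,
    add_sub_cancel_left]
  exact sum_mem fun i _ => smul_mem _ _ (subset_span ⟨i, rfl⟩)

end Projection

variable [DecidableEq ι]

structure IsSymplecticFamily (φ : LinearMap.BilinForm R M) (e f : ι → M) : Prop where
  isotropic_left : ∀ i j, φ (e i) (e j) = 0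
  isotropic_right : ∀ i j, φ (f i) (f j) = 0
  pairing : ∀ i j, φ (e i) (f j) = if i = j then 1 else 0

namespace IsSymplecticFamily

theorem pairing_symm (hf : IsSymplecticFamily φ e f) (hφ : φ.IsAlt) (i j : ι) :
    φ (f j) (e i) = if i = j then -1 else 0 := by
  rw [← hφ.neg_eq (e i) (f j), hf.pairing]
  split_ifs <;> simp

variable [Fintype ι]

theorem linearIndependent (hf : IsSymplecticFamily φ e f) :
    LinearIndependent R (Sum.elim e f) := by
  rw [Fintype.linearIndependent_iff]
  rintro c hc (j | j)
  · simpa [Fintype.sum_sum_type, hf.pairing, hf.isotropic_right] using congr(φ $hc (f j))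
  · simpa [Fintype.sum_sum_type, hf.pairing, hf.isotropic_left] using congr(φ (e j) $hc)

theorem symplecticProj_mem_orthogonal (hf : IsSymplecticFamily φ e f) (hφ : φ.IsAlt) (m : M) :
    symplecticProj φ e f m ∈ φ.orthogonal (span R (range (Sum.elim e f))) := by
  refine mem_orthogonal_span_iff.mpr fun j => ⟨?_, ?_⟩ <;>
    simp [symplecticProj_apply, hf.pairing, hf.isotropic_left, hf.isotropic_right,
      hf.pairing_symm hφ]

theorem span_le_ker_symplecticProj (hf : IsSymplecticFamily φ e f) (hφ : φ.IsAlt) :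
    span R (range (Sum.elim e f)) ≤ LinearMap.ker (symplecticProj φ e f) := by
  refine span_le.mpr ?_
  rintro _ ⟨i | i, rfl⟩ <;>
    simp [symplecticProj_apply, hf.pairing, hf.isotropic_left, hf.isotropic_right,
      hf.pairing_symm hφ]

theorem isCompl_orthogonal (hf : IsSymplecticFamily φ e f) (hφ : φ.IsAlt) :
    IsCompl (span R (range (Sum.elim e f))) (φ.orthogonal (span R (range (Sum.elim e f)))) := by
  refine ⟨disjoint_def.mpr fun y hW hW' => ?_, codisjoint_iff.mpr (eq_top_iff.mpr fun m _ => ?_)⟩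
  · rw [← symplecticProj_eq_self hW']
    exact hf.span_le_ker_symplecticProj hφ hW
  · rw [← sub_add_cancel m (symplecticProj φ e f m)]
    exact add_mem_sup (sub_symplecticProj_mem_span m) (hf.symplecticProj_mem_orthogonal hφ m)

theorem exists_snoc {n : ℕ} {e f : Fin n → M} (hf : IsSymplecticFamily φ e f) (hφ : φ.IsAlt)
    {x y : M} (hx : ∀ i, φ (e i) x = 0) (hy : φ (symplecticProj φ e f x) y = 1) :
    ∃ f' : Fin (n + 1) → M, IsSymplecticFamily φ (Fin.snoc e x) f' := by
  set W := span R (range (Sum.elim e f))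
  have hW : ∀ u ∈ φ.orthogonal W, ∀ w ∈ W, φ u w = 0 := fun u hu w hw => by
    rw [← hφ.neg_eq, LinearMap.BilinForm.mem_orthogonal_iff.mp hu w hw, neg_zero]
  set y' := symplecticProj φ e f y
  have hy' : y' ∈ φ.orthogonal W := hf.symplecticProj_mem_orthogonal hφ y
  have hey : ∀ i, φ (e i) y' = 0 := fun i => (mem_orthogonal_span_iff.mp hy' i).1
  have hfy : ∀ i, φ (f i) y' = 0 := fun i => (mem_orthogonal_span_iff.mp hy' i).2
  have hyf : ∀ i, φ y' (f i) = 0 := fun i => hW _ hy' _ (subset_span ⟨Sum.inr i, rfl⟩)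
  have hxe : ∀ i, φ x (e i) = 0 := fun i => by rw [← hφ.neg_eq, hx, neg_zero]
  have hxy : φ x y' = 1 := by
    have h₁ : φ (x - symplecticProj φ e f x) y' = 0 :=
      LinearMap.BilinForm.mem_orthogonal_iff.mp hy' _ (sub_symplecticProj_mem_span x)
    have h₂ : φ (symplecticProj φ e f x) (y - y') = 0 :=
      hW _ (hf.symplecticProj_mem_orthogonal hφ x) _ (sub_symplecticProj_mem_span y)
    rw [map_sub, LinearMap.sub_apply, sub_eq_zero] at h₁
    rw [map_sub, sub_eq_zero, hy] at h₂
    rw [h₁, ← h₂]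
  refine ⟨Fin.snoc (fun i => f i - φ x (f i) • y') y', ⟨?_, ?_, ?_⟩⟩ <;> intro i j <;>
    cases i using Fin.lastCases <;> cases j using Fin.lastCases <;>
    simp [hf.isotropic_left, hf.isotropic_right, hf.pairing, hx, hxe, hey, hfy, hyf, hxy,
      hφ.self_eq_zero, Fin.castSucc_ne_last, (Fin.castSucc_ne_last _).symm]

end IsSymplecticFamily

end SymplecticFamily

theorem exists_addOrderOf_eq {G : Type*} [AddCommGroup G] [Finite G] {d : ℕ} (hd : 0 < d)
    (hG : ∀ g : G, d • g = 0) (h : ∀ p, p.Prime → p ∣ d → ∃ g : G, (d / p) • g ≠ 0) :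
    ∃ g : G, addOrderOf g = d := by
  obtain ⟨g, hg⟩ :=
    AddMonoid.exists_addOrderOf_eq_exponent (AddMonoid.ExponentExists.of_finite (G := G))
  refine ⟨g, addOrderOf_eq_of_nsmul_and_div_prime_nsmul hd (hG g) fun p hp hpd hgp => ?_⟩
  obtain ⟨y, hy⟩ := h p hp hpd
  exact hy (AddMonoid.exponent_dvd_iff_forall_nsmul_eq_zero.mp
    (hg ▸ addOrderOf_dvd_of_nsmul_eq_zero hgp) y)

namespace ZMod

variable {d : ℕ} [NeZero d]

theorem exists_eq_natCast_mul_of_div_mul_eq_zero {p : ℕ} (hp : 0 < p) (hpd : p ∣ d)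
    {c : ZMod d} (hc : ((d / p : ℕ) : ZMod d) * c = 0) : ∃ c', c = p * c' := by
  rw [← natCast_zmod_val c, ← Nat.cast_mul, natCast_eq_zero_iff] at hc
  conv_lhs at hc => rw [← Nat.div_mul_cancel hpd]
  obtain ⟨q, hq⟩ :=
    (Nat.mul_dvd_mul_iff_left (Nat.div_pos (Nat.le_of_dvd (NeZero.pos d) hpd) hp)).mp hc
  exact ⟨q, by rw [← natCast_zmod_val c, hq, Nat.cast_mul]⟩

theorem eq_zero_of_smul_eq_zero_of_addOrderOf_eq {M : Type*} [AddCommGroup M]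
    [Module (ZMod d) M] {x : M} (hx : addOrderOf x = d) {t : ZMod d} (ht : t • x = 0) :
    t = 0 := by
  rw [← natCast_zmod_val t, Nat.cast_smul_eq_nsmul] at ht
  rw [← natCast_zmod_val t, natCast_eq_zero_iff]
  exact hx.symm.dvd.trans (addOrderOf_dvd_of_nsmul_eq_zero ht)

end ZMod

section ZModModule

variable {d : ℕ} {M : Type*} [AddCommGroup M] [Module (ZMod d) M]

theorem card_eq_pow_of_basis {ι : Type*} [Fintype ι] (b : Module.Basis ι (ZMod d) M) :
    Nat.card M = d ^ Fintype.card ι := by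
  rw [Nat.card_congr b.equivFun.toEquiv, Nat.card_fun, Nat.card_zmod, Nat.card_eq_fintype_card]

variable [NeZero d]

theorem exists_apply_eq_one {N : Type*} [AddCommGroup N] [Module (ZMod d) N]
    {φ : M →ₗ[ZMod d] N →ₗ[ZMod d] ZMod d} (hsep : φ.SeparatingLeft) {x : M}
    (hx : ∀ t : ZMod d, t • x = 0 → t = 0) : ∃ y, φ x y = 1 := by
  let I := (LinearMap.range (φ x)).toAddSubgroup
  have hI : (Nat.card I : ZMod d) = 0 := hx _ <| hsep _ fun m => by
    rw [map_smul, LinearMap.smul_apply, Nat.cast_smul_eq_nsmul]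
    exact congr(Subtype.val $(card_nsmul_eq_zero' (G := I) (x := ⟨φ x m, m, rfl⟩)))
  have hcard : Nat.card I = Nat.card (ZMod d) :=
    le_antisymm (Nat.card_le_card_of_injective _ Subtype.coe_injective) <| by
      rw [Nat.card_zmod]
      exact Nat.le_of_dvd Nat.card_pos ((ZMod.natCast_eq_zero_iff _ _).mp hI)
  exact (AddSubgroup.eq_top_of_card_eq I hcard ▸ AddSubgroup.mem_top 1 : (1 : ZMod d) ∈ I)

variable [Finite M] [Module.Free (ZMod d) M]

theorem exists_nsmul_eq_of_div_prime_nsmul_eq_zero {p : ℕ} (hp : p.Prime) (hpd : p ∣ d)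
    {y : M} (hy : (d / p) • y = 0) : ∃ z : M, p • z = y := by
  have := Module.Finite.of_finite (R := ZMod d) (M := M)
  let g := Module.Free.chooseBasis (ZMod d) M
  have hc : ∀ i, ∃ c, g.repr y i = p * c := fun i =>
    ZMod.exists_eq_natCast_mul_of_div_mul_eq_zero hp.pos hpd <| by
      simpa [nsmul_eq_mul] using congr(g.repr $hy i)
  choose c hc using hc
  refine ⟨∑ i, c i • g i, ?_⟩
  conv_rhs => rw [← g.sum_repr y]
  simp [Finset.smul_sum, smul_smul, hc, ← Nat.cast_smul_eq_nsmul (ZMod d)]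

theorem exists_div_prime_nsmul_ne_zero_of_isCompl {W N : Submodule (ZMod d) M} (h : IsCompl W N)
    {p : ℕ} (hp : p.Prime) (hpd : p ∣ d) (hpN : p ∣ Nat.card N) : ∃ y : N, (d / p) • y ≠ 0 := by
  by_contra! hN
  have hsurj : Function.Surjective (fun y : N => p • y) := fun y => by
    obtain ⟨z, hz⟩ := exists_nsmul_eq_of_div_prime_nsmul_eq_zero hp hpd congr(Subtype.val $(hN y))
    refine ⟨N.projectionOnto W h.symm z, ?_⟩
    show p • N.projectionOnto W h.symm z = y
    rw [← map_nsmul, hz, projectionOnto_apply_left]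
  have := Fact.mk hp
  obtain ⟨y, hy⟩ := exists_prime_addOrderOf_dvd_card' p hpN
  have hy0 : y = 0 :=
    Finite.injective_iff_surjective.mpr hsurj (by simp [← hy, addOrderOf_nsmul_eq_zero])
  rw [hy0, addOrderOf_zero] at hy
  exact hp.one_lt.ne hy

theorem exists_mem_addOrderOf_eq_of_isCompl {W N : Submodule (ZMod d) M} (h : IsCompl W N)
    (hN : ∀ p, p.Prime → p ∣ d → p ∣ Nat.card N) : ∃ x ∈ N, addOrderOf x = d := by
  obtain ⟨x, hx⟩ := exists_addOrderOf_eq (G := N) (NeZero.pos d)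
    (fun y => by rw [← Nat.cast_smul_eq_nsmul (ZMod d), ZMod.natCast_self, zero_smul])
    fun p hp hpd => exists_div_prime_nsmul_ne_zero_of_isCompl h hp hpd (hN p hp hpd)
  exact ⟨x, x.2, (AddSubgroup.addOrderOf_coe (H := N.toAddSubgroup) x).trans hx⟩

end ZModModule

namespace IsSymplecticFamily

variable {d : ℕ} {M : Type*} [AddCommGroup M] [Module (ZMod d) M]
  {φ : LinearMap.BilinForm (ZMod d) M}

theorem card_span {n : ℕ} {e f : Fin n → M} (hf : IsSymplecticFamily φ e f) :
    Nat.card (span (ZMod d) (range (Sum.elim e f))) = d ^ (2 * n) := by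
  rw [card_eq_pow_of_basis (Module.Basis.span hf.linearIndependent)]
  simp [two_mul]

variable [NeZero d]

theorem card_orthogonal [Finite M] {n r : ℕ} {e f : Fin n → M} (hf : IsSymplecticFamily φ e f)
    (hφ : φ.IsAlt) (hM : Nat.card M = d ^ r) :
    Nat.card (φ.orthogonal (span (ZMod d) (range (Sum.elim e f)))) = d ^ (r - 2 * n) := by
  have hprod := Nat.card_congr (prodEquivOfIsCompl _ _ (hf.isCompl_orthogonal hφ)).toEquiv
  rw [Nat.card_prod, hf.card_span, hM] at hprod
  rcases (NeZero.one_le : 1 ≤ d).eq_or_lt with rfl | hd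
  · simpa using hprod
  · have hle : 2 * n ≤ r := (Nat.pow_dvd_pow_iff_le_right hd).mp (Dvd.intro _ hprod)
    rw [← Nat.add_sub_cancel' hle, pow_add] at hprod
    exact Nat.eq_of_mul_eq_mul_left (pow_pos (NeZero.pos d) _) hprod

theorem exists_basis_extending [Finite M] [Module.Free (ZMod d) M] (hφ : φ.IsAlt)
    (hsep : φ.SeparatingLeft) {r : ℕ} (hM : Nat.card M = d ^ r) {n : ℕ} {e f : Fin n → M}
    (hf : IsSymplecticFamily φ e f) :
    ∃ (n' : ℕ) (h : n ≤ n') (B : Module.Basis (Fin n' ⊕ Fin n') (ZMod d) M),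
      (∀ i, B (Sum.inl (Fin.castLE h i)) = e i) ∧
      IsSymplecticFamily φ (fun i => B (Sum.inl i)) (fun i => B (Sum.inr i)) := by
  have hcompl := hf.isCompl_orthogonal hφ
  have hN := hf.card_orthogonal hφ hM
  by_cases hr : r - 2 * n = 0
  · have hW : span (ZMod d) (range (Sum.elim e f)) = ⊤ := by
      rw [hr, pow_zero, Nat.card_eq_one_iff_unique] at hN
      rw [← hcompl.sup_eq_top, subsingleton_iff_eq_bot.mp hN.1, sup_bot_eq]
    refine ⟨n, le_rfl, Module.Basis.mk hf.linearIndependent hW.ge, fun i => by simp, ?_⟩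
    simpa using hf
  · obtain ⟨x, hxN, hx⟩ := exists_mem_addOrderOf_eq_of_isCompl hcompl fun p _ hpd =>
      hN ▸ hpd.trans (dvd_pow_self d hr)
    obtain ⟨y, hy⟩ := exists_apply_eq_one hsep fun t ht =>
      ZMod.eq_zero_of_smul_eq_zero_of_addOrderOf_eq hx ht
    obtain ⟨f', hf'⟩ := hf.exists_snoc hφ (fun i => (mem_orthogonal_span_iff.mp hxN i).1)
      (y := y) (by rwa [symplecticProj_eq_self hxN])
    obtain ⟨n', h', B, hBe, hB⟩ := hf'.exists_basis_extending hφ hsep hM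
    exact ⟨n', n.le_succ.trans h', B, fun i => (hBe i.castSucc).trans (Fin.snoc_castSucc ..), hB⟩
termination_by r - 2 * n

end IsSymplecticFamily

theorem exists_isSymplecticFamily_of_linearIndependent {d : ℕ} [NeZero d] {M : Type*}
    [AddCommGroup M] [Module (ZMod d) M] {φ : LinearMap.BilinForm (ZMod d) M} (hφ : φ.IsAlt)
    (hsep : φ.SeparatingLeft) :
    ∀ {k : ℕ} {v : Fin k → M}, LinearIndependent (ZMod d) v → (∀ i j, φ (v i) (v j) = 0) →
      ∃ f, IsSymplecticFamily φ v f
  | 0, _, _, _ => ⟨finZeroElim, ⟨finZeroElim, finZeroElim, finZeroElim⟩⟩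
  | k + 1, v, hv, hiso => by
    obtain ⟨f, hf⟩ : ∃ f, IsSymplecticFamily φ (Fin.init v) f :=
      exists_isSymplecticFamily_of_linearIndependent hφ hsep
        (hv.comp Fin.castSucc (Fin.castSucc_injective k)) fun i j => hiso _ _
    have hx : ∀ i, φ (Fin.init v i) (v (Fin.last k)) = 0 := fun i => hiso _ _
    have hspan : span (ZMod d) (range (Fin.init v)) ≤
        span (ZMod d) (v '' (univ \ {Fin.last k})) :=
      span_mono <| range_subset_iff.mpr fun i =>
        ⟨i.castSucc, ⟨mem_univ _, Fin.castSucc_ne_last i⟩, rfl⟩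
    obtain ⟨y, hy⟩ :=
      exists_apply_eq_one hsep (x := symplecticProj φ (Fin.init v) f (v (Fin.last k)))
        fun t ht => hv.eq_zero_of_smul_mem_span (Fin.last k) t <| hspan <| by
          have := smul_mem _ t (symplecticProj_sub_mem_span_left (f := f) hx)
          rwa [smul_sub, ht, zero_sub, neg_mem_iff] at this
    obtain ⟨f', hf'⟩ := hf.exists_snoc hφ hx hy
    exact ⟨f', by rwa [Fin.snoc_init_self] at hf'⟩

/-- Let `M` be a finite free `ℤ_d`-module with a symplectic form `φ`,
and let `L ⊆ M` be a free isotropic submodule.  Then every `ℤ_d`-basis `(e₁,…,e_k)` of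
`L` can be extended to a symplectic basis `(e₁,…,e_n,f₁,…,f_n)` of `M`. -/
theorem free_isotropic_basis_extends_to_symplectic_basis
    (d : ℕ) [NeZero d]
    (M : Type) [AddCommGroup M] [Module (ZMod d) M] [Finite M] [Module.Free (ZMod d) M]
    (φ : M →ₗ[ZMod d] M →ₗ[ZMod d] ZMod d)
    (halt : ∀ m : M, φ m m = 0)
    (hsymp : ∀ m₀ : M, (∀ m : M, φ m₀ m = 0) → m₀ = 0)
    (L : Submodule (ZMod d) M)
    (hiso : ∀ x ∈ L, ∀ y ∈ L, φ x y = 0)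
    (k : ℕ) (b : Module.Basis (Fin k) (ZMod d) L) :
    ∃ (n : ℕ) (hkn : k ≤ n) (B : Module.Basis (Fin n ⊕ Fin n) (ZMod d) M),
      (∀ i : Fin k, B (Sum.inl (Fin.castLE hkn i)) = (b i : M)) ∧
      (∀ i j : Fin n, φ (B (Sum.inl i)) (B (Sum.inl j)) = 0) ∧
      (∀ i j : Fin n, φ (B (Sum.inr i)) (B (Sum.inr j)) = 0) ∧
      (∀ i j : Fin n, φ (B (Sum.inl i)) (B (Sum.inr j)) = if i = j then 1 else 0) := by
  have := Module.Finite.of_finite (R := ZMod d) (M := M)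
  obtain ⟨f, hf⟩ := exists_isSymplecticFamily_of_linearIndependent halt hsymp
    (b.linearIndependent.map' L.subtype L.ker_subtype) fun i j => hiso _ (b i).2 _ (b j).2
  obtain ⟨n, hkn, B, hBb, hB⟩ := hf.exists_basis_extending halt hsymp
    (card_eq_pow_of_basis (Module.Free.chooseBasis (ZMod d) M))
  exact ⟨n, hkn, B, hBb, hB.isotropic_left, hB.isotropic_right, hB.pairing⟩
end

section
/- Let M = ℤ_d^{2n} with basis (z₁,…,z_n,x₁,…,x_n) and symplectic form φ given by φ(z_i,z_j) = φ(x_i,x_j) = 0 and φ(z_i,x_j) = δ_{ij} = −φ(x_j,z_i). Then: (i) there is a unique surjective group homomorphism τ : P_n → M with τ(Z_r) = z_r, τ(X_r) = x_r for all r and τ(ζ·id) = 0, and its kernel is the cyclic group generated by the scalar operator ζ·id, which has order d̄; (ii) for all x, y ∈ P_n one has x y = ξ^{φ(τ(x),τ(y))} y x; (iii) every element of M has a τ-preimage in P_n of the same order. (In the terminology of the paper: P_n is a Heisenberg extension of (ℤ_d^{2n}, φ).) -/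
/-!
Every element of `P_n` acts as a Weyl operator `f ↦ c · ξ^(a ⬝ᵥ w) · f (w - b)` with `c` a power
of `ζ`, and since `ξ` is a primitive `d`-th root of unity the operator determines `(c, a, b)`;
`τ` records `(a, b)`. Composing Weyl operators adds the vectors and multiplies the phases,
with the extra factor `ξ^(-(a' ⬝ᵥ b))`: this makes `τ` a homomorphism, identifies its kernel with
the scalars `ζ^k`, and, comparing `x y` with `y x`, gives the commutation relation. For (iii),
if `D` is the order of `m = (a, b)` and `τ g = m`, then `g ^ D` is a scalar; rescaling `g` to the
phase `ζ^((D - 1) · (a ⬝ᵥ b))` makes it `1`: the `D`-th power of that phase,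
`ζ^(D (D - 1) · (a ⬝ᵥ b)) = ξ^(D (D - 1) / 2 · (a ⬝ᵥ b))`, cancels the factor that the
commutation of the `D` factors contributes to `g ^ D`.
-/

noncomputable section

namespace QuditPauli

/-- `d̄`: equals `d` if `d` is odd and `2d` if `d` is even. -/
def dbar (d : ℕ) : ℕ := if d % 2 = 1 then d else 2 * d

/-- The Hilbert space of `n` qudits of dimension `d`, modelled as the space of
complex functions on `(ℤ_d)^n`; the standard basis vectors `δ_w` realize the basis
`v_{i₁} ⊗ … ⊗ v_{i_n}` of `(ℂ^d)^{⊗n}`. -/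
abbrev QV (d n : ℕ) : Type := (Fin n → ZMod d) → ℂ

variable {d n : ℕ}

/-- The invertible diagonal operator multiplying the `w`-th coordinate by `c w`. -/
def diagOp (c : (Fin n → ZMod d) → ℂ) (hc : ∀ w, c w ≠ 0) : QV d n ≃ₗ[ℂ] QV d n where
  toFun f := fun w => c w * f w
  invFun f := fun w => (c w)⁻¹ * f w
  map_add' f g := by funext w; simp [mul_add]
  map_smul' a f := by funext w; simp only [Pi.smul_apply, smul_eq_mul, RingHom.id_apply]; ring
  left_inv f := by
    funext w
    field_simp
    rw [mul_comm, mul_div_assoc, div_self (hc w), mul_one]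
  right_inv f := by
    funext w
    field_simp
    rw [mul_comm, mul_div_assoc, div_self (hc w), mul_one]

/-- The permutation of `(ℤ_d)^n` subtracting `1` from the `r`-th coordinate. -/
def shiftEquiv (d n : ℕ) (r : Fin n) : (Fin n → ZMod d) ≃ (Fin n → ZMod d) where
  toFun w := Function.update w r (w r - 1)
  invFun w := Function.update w r (w r + 1)
  left_inv w := by
    funext i
    rcases eq_or_ne i r with rfl | h
    · simp
    · simp [Function.update_of_ne h]
  right_inv w := by
    funext i
    rcases eq_or_ne i r with rfl | h
    · simp
    · simp [Function.update_of_ne h]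

/-- The qudit Pauli operator `X` on the `r`-th factor: on basis vectors,
`X_r (v_{i₁} ⊗ … ⊗ v_{i_r} ⊗ … ) = v_{i₁} ⊗ … ⊗ v_{i_r + 1} ⊗ …`. -/
def Xop (d n : ℕ) (r : Fin n) : QV d n ≃ₗ[ℂ] QV d n :=
  LinearEquiv.funCongrLeft ℂ ℂ (shiftEquiv d n r)

/-- The qudit Pauli operator `Z` (with parameter `ξ`) on the `r`-th factor: on basis
vectors, `Z_r (v_{i₁} ⊗ … ⊗ v_{i_r} ⊗ …) = ξ^{i_r} · (v_{i₁} ⊗ … ⊗ v_{i_r} ⊗ …)`. -/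
def Zop (d n : ℕ) (r : Fin n) (ξ : ℂ) (hξ : ξ ≠ 0) : QV d n ≃ₗ[ℂ] QV d n :=
  diagOp (fun w => ξ ^ (w r).val) (fun _ => pow_ne_zero _ hξ)

/-- The scalar operator `c · id`. -/
def scalarOp (d n : ℕ) (c : ℂ) (hc : c ≠ 0) : QV d n ≃ₗ[ℂ] QV d n :=
  diagOp (fun _ => c) (fun _ => hc)

/-- The `n`-qudit Pauli group `P_n = P_n^{(d)}`: the subgroup of `GL((ℂ^d)^{⊗n})`
generated by `X₁,…,X_n`, `Z₁,…,Z_n` (with `ξ = ζ²`) and the scalar operator `ζ·id`. -/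
def pauliGroup (d n : ℕ) (ζ : ℂ) (hζ : ζ ≠ 0) : Subgroup (QV d n ≃ₗ[ℂ] QV d n) :=
  Subgroup.closure
    ({scalarOp d n ζ hζ} ∪ Set.range (fun r => Xop d n r) ∪
      Set.range (fun r => Zop d n r (ζ ^ 2) (pow_ne_zero 2 hζ)))

lemma scalarOp_mem (d n : ℕ) (ζ : ℂ) (hζ : ζ ≠ 0) :
    scalarOp d n ζ hζ ∈ pauliGroup d n ζ hζ :=
  Subgroup.subset_closure (by simp)

lemma Xop_mem (d n : ℕ) (ζ : ℂ) (hζ : ζ ≠ 0) (r : Fin n) :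
    Xop d n r ∈ pauliGroup d n ζ hζ :=
  Subgroup.subset_closure (by simp)

lemma Zop_mem (d n : ℕ) (ζ : ℂ) (hζ : ζ ≠ 0) (r : Fin n) :
    Zop d n r (ζ ^ 2) (pow_ne_zero 2 hζ) ∈ pauliGroup d n ζ hζ :=
  Subgroup.subset_closure (by simp)

/-- The scalar operator `ζ·id` as an element of the Pauli group. -/
def sP (d n : ℕ) (ζ : ℂ) (hζ : ζ ≠ 0) : (pauliGroup d n ζ hζ) :=
  ⟨scalarOp d n ζ hζ, scalarOp_mem d n ζ hζ⟩

/-- `X_r` as an element of the Pauli group. -/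
def xP (d n : ℕ) (ζ : ℂ) (hζ : ζ ≠ 0) (r : Fin n) : (pauliGroup d n ζ hζ) :=
  ⟨Xop d n r, Xop_mem d n ζ hζ r⟩

/-- `Z_r` as an element of the Pauli group. -/
def zP (d n : ℕ) (ζ : ℂ) (hζ : ζ ≠ 0) (r : Fin n) : (pauliGroup d n ζ hζ) :=
  ⟨Zop d n r (ζ ^ 2) (pow_ne_zero 2 hζ), Zop_mem d n ζ hζ r⟩

/-- A linear automorphism of `(ℂ^d)^{⊗n}` is unitary if it preserves the standard
Hermitian inner product `⟪f, g⟫ = ∑_w conj (f w) * g w`. -/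
def IsUnitaryOp (d n : ℕ) [NeZero d] (U : QV d n ≃ₗ[ℂ] QV d n) : Prop :=
  ∀ f g : QV d n,
    ∑ w : Fin n → ZMod d, (starRingEnd ℂ) (U f w) * (U g w)
      = ∑ w : Fin n → ZMod d, (starRingEnd ℂ) (f w) * g w

/-- The protected space `V^H = {v ∈ V : h(v) = v for all h ∈ H}` of a subgroup `H` of
the Pauli group. -/
def fixedSpace {d n : ℕ} {ζ : ℂ} {hζ : ζ ≠ 0} (H : Subgroup (pauliGroup d n ζ hζ)) :
    Submodule ℂ (QV d n) where
  carrier := {v | ∀ g ∈ H, ((g : QV d n ≃ₗ[ℂ] QV d n) : QV d n ≃ₗ[ℂ] QV d n) v = v}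
  add_mem' := by
    intro a b ha hb g hg
    rw [map_add, ha g hg, hb g hg]
  zero_mem' := by
    intro g hg
    exact map_zero _
  smul_mem' := by
    intro c v hv g hg
    rw [map_smul, hv g hg]

end QuditPauli

namespace QuditPauli

/-- The phase-space `ℤ_d`-module `M = ℤ_d^{2n}`: the first component records the
`z`-coordinates, the second the `x`-coordinates. -/
abbrev PhSp (d n : ℕ) : Type := (Fin n → ZMod d) × (Fin n → ZMod d)

/-- The basis vector `z_r` of the phase space. -/
def zvec (d n : ℕ) (r : Fin n) : PhSp d n := (Pi.single r 1, 0)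

/-- The basis vector `x_r` of the phase space. -/
def xvec (d n : ℕ) (r : Fin n) : PhSp d n := (0, Pi.single r 1)

/-- The standard symplectic form on the phase space: `φ(z_i, z_j) = φ(x_i, x_j) = 0`
and `φ(z_i, x_j) = δ_{ij} = −φ(x_j, z_i)`. -/
def phiForm (d n : ℕ) (a b : PhSp d n) : ZMod d :=
  ∑ i : Fin n, (a.1 i * b.2 i - b.1 i * a.2 i)

end QuditPauli

namespace QuditPauli

section Weyl

variable {d n : ℕ} (ψ : AddChar (ZMod d) ℂ)

def IsWeyl (g : QV d n ≃ₗ[ℂ] QV d n) (c : ℂ) (v : PhSp d n) : Prop :=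
  ∀ f w, g f w = c * ψ (v.1 ⬝ᵥ w) * f (w - v.2)

variable {ψ} {g h : QV d n ≃ₗ[ℂ] QV d n} {c c' : ℂ} {v v' : PhSp d n}

theorem isWeyl_one : IsWeyl ψ (1 : QV d n ≃ₗ[ℂ] QV d n) 1 0 := by
  intro f w
  simp

theorem IsWeyl.ext (hg : IsWeyl ψ g c v) (hh : IsWeyl ψ h c v) : g = h :=
  LinearEquiv.ext fun f => funext fun w => by rw [hg, hh]

theorem IsWeyl.mul (hg : IsWeyl ψ g c v) (hh : IsWeyl ψ h c' v') :
    IsWeyl ψ (g * h) (c * c' * ψ (-(v'.1 ⬝ᵥ v.2))) (v + v') := by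
  intro f w
  rw [LinearEquiv.mul_apply, hg, hh, Prod.fst_add, Prod.snd_add, add_dotProduct, dotProduct_sub,
    sub_eq_add_neg (v'.1 ⬝ᵥ w), AddChar.map_add_eq_mul, AddChar.map_add_eq_mul, sub_sub]
  ring

theorem IsWeyl.inv (hc : c ≠ 0) (hg : IsWeyl ψ g c v) :
    IsWeyl ψ g⁻¹ (c⁻¹ * ψ (-(v.1 ⬝ᵥ v.2))) (-v) := by
  intro f w
  have hw := hg (g⁻¹ f) (w + v.2)
  rw [show g (g⁻¹ f) = f from g.apply_symm_apply f, add_sub_cancel_right] at hw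
  rw [Prod.fst_neg, Prod.snd_neg, sub_neg_eq_add, neg_dotProduct, hw, dotProduct_add,
    AddChar.map_neg_eq_inv, AddChar.map_neg_eq_inv, AddChar.map_add_eq_mul]
  have hψw := (ψ.val_isUnit (v.1 ⬝ᵥ w)).ne_zero
  have hψv := (ψ.val_isUnit (v.1 ⬝ᵥ v.2)).ne_zero
  field_simp

theorem IsWeyl.pow (hg : IsWeyl ψ g c v) (k : ℕ) :
    IsWeyl ψ (g ^ k) (c ^ k * ψ (-((∑ j ∈ Finset.range k, j) • (v.1 ⬝ᵥ v.2)))) (k • v) := by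
  induction k with
  | zero => simpa using isWeyl_one
  | succ k ih =>
    convert ih.mul hg using 1
    · rw [pow_succ]
    · rw [Prod.smul_snd, dotProduct_smul, mul_assoc, mul_assoc, mul_left_comm (ψ _),
        ← AddChar.map_add_eq_mul, Finset.sum_range_succ, add_smul, neg_add, pow_succ, mul_assoc]
    · rw [succ_nsmul]

theorem IsWeyl.unique (hψ : Function.Injective ψ) (hc : c ≠ 0)
    (hg : IsWeyl ψ g c v) (hg' : IsWeyl ψ g c' v') : c = c' ∧ v = v' := by
  classical
  have hb : v.2 = v'.2 := by
    by_contra hne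
    have h := (hg (Pi.single 0 1) v.2).symm.trans (hg' (Pi.single 0 1) v.2)
    rw [sub_self, Pi.single_eq_same, Pi.single_eq_of_ne (sub_ne_zero.2 hne), mul_zero, mul_one] at h
    exact mul_ne_zero hc (ψ.val_isUnit _).ne_zero h
  have hphase : ∀ w, c * ψ (v.1 ⬝ᵥ w) = c' * ψ (v'.1 ⬝ᵥ w) := fun w => by
    simpa [hb] using (hg (Pi.single (w - v'.2) 1) w).symm.trans (hg' (Pi.single (w - v'.2) 1) w)
  have hcc : c = c' := by simpa using hphase 0
  refine ⟨hcc, Prod.ext (funext fun r => ?_) hb⟩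
  have := hphase (Pi.single r 1)
  rw [hcc, dotProduct_single_one, dotProduct_single_one] at this
  exact hψ (mul_left_cancel₀ (hcc ▸ hc) this)

theorem IsWeyl.eq_one_iff (hψ : Function.Injective ψ) (hg : IsWeyl ψ g c 0) : g = 1 ↔ c = 1 :=
  ⟨fun h => (isWeyl_one.unique hψ one_ne_zero (h ▸ hg)).1.symm,
    fun h => hg.ext (h ▸ isWeyl_one)⟩

end Weyl

section Pauli

variable {d n : ℕ}

theorem isWeyl_scalarOp (ψ : AddChar (ZMod d) ℂ) (c : ℂ) (hc : c ≠ 0) :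
    IsWeyl ψ (scalarOp d n c hc) c 0 := by
  intro f w
  simp [scalarOp, diagOp]

theorem isWeyl_scalarOp_zpow (ψ : AddChar (ZMod d) ℂ) (c : ℂ) (hc : c ≠ 0) (k : ℤ) :
    IsWeyl ψ (scalarOp d n c hc ^ k) (c ^ k) 0 := by
  cases k with
  | ofNat m => simpa using (isWeyl_scalarOp ψ c hc).pow m
  | negSucc m =>
    have h : IsWeyl ψ (scalarOp d n c hc ^ (m + 1)) (c ^ (m + 1)) 0 := by
      simpa using (isWeyl_scalarOp ψ c hc).pow (m + 1)
    simpa [zpow_negSucc] using h.inv (pow_ne_zero _ hc)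

theorem isWeyl_Xop (ψ : AddChar (ZMod d) ℂ) (r : Fin n) : IsWeyl ψ (Xop d n r) 1 (xvec d n r) := by
  intro f w
  suffices shiftEquiv d n r w = w - Pi.single r 1 by simp [xvec, Xop, this]
  ext i
  rcases eq_or_ne i r with rfl | h
  · simp [shiftEquiv]
  · simp [shiftEquiv, h]

theorem isWeyl_Zop [NeZero d] {ξ : ℂ} (hξ : ξ ^ d = 1) (hξ0 : ξ ≠ 0) (r : Fin n) :
    IsWeyl (AddChar.zmodChar d hξ) (Zop d n r ξ hξ0) 1 (zvec d n r) := by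
  intro f w
  simp [zvec, Zop, diagOp, AddChar.zmodChar_apply]

theorem phiForm_eq_dotProduct_sub (v w : PhSp d n) :
    phiForm d n v w = v.1 ⬝ᵥ w.2 - w.1 ⬝ᵥ v.2 := by
  simp [phiForm, dotProduct, Finset.sum_sub_distrib]

end Pauli

section Heisenberg

variable {d n : ℕ} {ζ : ℂ}

theorem pauliGroup_hom_ext {hζ0 : ζ ≠ 0} {M : Type*} [Monoid M] {f f' : pauliGroup d n ζ hζ0 →* M}
    (hs : f (sP d n ζ hζ0) = f' (sP d n ζ hζ0)) (hx : ∀ r, f (xP d n ζ hζ0 r) = f' (xP d n ζ hζ0 r))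
    (hz : ∀ r, f (zP d n ζ hζ0 r) = f' (zP d n ζ hζ0 r)) : f = f' := by
  refine MonoidHom.eq_of_eqOn_dense Subgroup.closure_closure_coe_preimage fun g hg => ?_
  simp only [Set.union_assoc, Set.mem_preimage, Set.mem_union, Set.mem_singleton_iff,
    Set.mem_range] at hg
  rcases hg with hg | ⟨r, hg⟩ | ⟨r, hg⟩
  · exact (Subtype.ext hg : g = sP d n ζ hζ0) ▸ hs
  · exact (Subtype.ext hg : xP d n ζ hζ0 r = g) ▸ hx r
  · exact (Subtype.ext hg : zP d n ζ hζ0 r = g) ▸ hz r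

variable [NeZero d]

theorem isPrimitiveRoot_sq_of_dbar (hζ : IsPrimitiveRoot ζ (dbar d)) :
    IsPrimitiveRoot (ζ ^ 2) d := by
  unfold dbar at hζ
  split_ifs at hζ with hodd
  · exact hζ.pow_of_coprime 2 (Nat.coprime_two_left.2 (Nat.odd_iff.2 hodd))
  · exact hζ.pow (Nat.mul_pos two_pos (NeZero.pos d)) rfl

def pauliChar (hζ : IsPrimitiveRoot ζ (dbar d)) : AddChar (ZMod d) ℂ :=
  AddChar.zmodChar d (isPrimitiveRoot_sq_of_dbar hζ).pow_eq_one

variable (hζ0 : ζ ≠ 0) (hζ : IsPrimitiveRoot ζ (dbar d))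

theorem pauliChar_apply (x : ZMod d) : pauliChar hζ x = ζ ^ (2 * x.val) := by
  rw [pauliChar, AddChar.zmodChar_apply, pow_mul]

theorem pauliChar_injective : Function.Injective (pauliChar hζ) := fun x y h => by
  rw [pauliChar, AddChar.zmodChar_apply, AddChar.zmodChar_apply] at h
  exact ZMod.val_injective d
    ((isPrimitiveRoot_sq_of_dbar hζ).pow_inj (ZMod.val_lt x) (ZMod.val_lt y) h)

theorem exists_isWeyl_of_mem (g : pauliGroup d n ζ hζ0) :
    ∃ v : PhSp d n, ∃ k : ℤ, IsWeyl (pauliChar hζ) g (ζ ^ k) v := by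
  have hψ (x : ZMod d) : pauliChar hζ x = ζ ^ (2 * (x.val : ℤ)) := by
    rw [pauliChar_apply]; norm_cast
  obtain ⟨g, hg⟩ := g
  induction hg using Subgroup.closure_induction with
  | mem g hg =>
    simp only [Set.union_assoc, Set.mem_union, Set.mem_singleton_iff, Set.mem_range] at hg
    rcases hg with rfl | ⟨r, rfl⟩ | ⟨r, rfl⟩
    · exact ⟨0, 1, by simpa using isWeyl_scalarOp _ ζ hζ0⟩
    · exact ⟨_, 0, by simpa using isWeyl_Xop _ r⟩
    · exact ⟨_, 0, by simpa [pauliChar] using isWeyl_Zop _ (pow_ne_zero 2 hζ0) r⟩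
  | one => exact ⟨0, 0, by simpa using isWeyl_one⟩
  | mul g h _ _ hg hh =>
    obtain ⟨v, k, hg⟩ := hg
    obtain ⟨v', k', hh⟩ := hh
    refine ⟨v + v', k + k' + 2 * ((-(v'.1 ⬝ᵥ v.2)).val : ℤ), ?_⟩
    rw [zpow_add₀ hζ0, zpow_add₀ hζ0, ← hψ]
    exact hg.mul hh
  | inv g _ hg =>
    obtain ⟨v, k, hg⟩ := hg
    refine ⟨-v, -k + 2 * ((-(v.1 ⬝ᵥ v.2)).val : ℤ), ?_⟩
    rw [zpow_add₀ hζ0, zpow_neg, ← hψ]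
    exact hg.inv (zpow_ne_zero k hζ0)

def weylVec (g : pauliGroup d n ζ hζ0) : PhSp d n := (exists_isWeyl_of_mem hζ0 hζ g).choose

theorem weylVec_eq_of_isWeyl {g : pauliGroup d n ζ hζ0} {c : ℂ} {v : PhSp d n}
    (hg : IsWeyl (pauliChar hζ) g c v) : weylVec hζ0 hζ g = v :=
  have ⟨k, hk⟩ := (exists_isWeyl_of_mem hζ0 hζ g).choose_spec
  ((hk.unique (pauliChar_injective hζ) (zpow_ne_zero k hζ0) hg).2)

def tau : pauliGroup d n ζ hζ0 →* Multiplicative (PhSp d n) where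
  toFun g := Multiplicative.ofAdd (weylVec hζ0 hζ g)
  map_one' := congrArg Multiplicative.ofAdd (weylVec_eq_of_isWeyl hζ0 hζ isWeyl_one)
  map_mul' g h := by
    obtain ⟨k, hg⟩ := (exists_isWeyl_of_mem hζ0 hζ g).choose_spec
    obtain ⟨k', hh⟩ := (exists_isWeyl_of_mem hζ0 hζ h).choose_spec
    exact congrArg Multiplicative.ofAdd (weylVec_eq_of_isWeyl hζ0 hζ (hg.mul hh))

theorem tau_eq_of_isWeyl {g : pauliGroup d n ζ hζ0} {c : ℂ} {v : PhSp d n}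
    (hg : IsWeyl (pauliChar hζ) g c v) : tau hζ0 hζ g = Multiplicative.ofAdd v :=
  congrArg Multiplicative.ofAdd (weylVec_eq_of_isWeyl hζ0 hζ hg)

theorem exists_isWeyl_tau (g : pauliGroup d n ζ hζ0) :
    ∃ k : ℤ, IsWeyl (pauliChar hζ) g (ζ ^ k) (tau hζ0 hζ g).toAdd :=
  (exists_isWeyl_of_mem hζ0 hζ g).choose_spec

theorem isWeyl_sP_zpow (k : ℤ) :
    IsWeyl (pauliChar hζ) ((sP d n ζ hζ0 ^ k : pauliGroup d n ζ hζ0) : QV d n ≃ₗ[ℂ] QV d n)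
      (ζ ^ k) 0 := by
  rw [SubgroupClass.coe_zpow]
  exact isWeyl_scalarOp_zpow _ ζ hζ0 k

theorem tau_sP : tau hζ0 hζ (sP d n ζ hζ0) = 1 :=
  tau_eq_of_isWeyl hζ0 hζ (isWeyl_scalarOp _ ζ hζ0)

theorem tau_xP (r : Fin n) : tau hζ0 hζ (xP d n ζ hζ0 r) = Multiplicative.ofAdd (xvec d n r) :=
  tau_eq_of_isWeyl hζ0 hζ (isWeyl_Xop _ r)

theorem tau_zP (r : Fin n) : tau hζ0 hζ (zP d n ζ hζ0 r) = Multiplicative.ofAdd (zvec d n r) :=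
  tau_eq_of_isWeyl hζ0 hζ (isWeyl_Zop _ (pow_ne_zero 2 hζ0) r)

theorem PhSp.eq_sum_nsmul (m : PhSp d n) :
    m = ∑ r, ((m.1 r).val • zvec d n r + (m.2 r).val • xvec d n r) := by
  ext r <;> simp [zvec, xvec, Prod.fst_sum, Prod.snd_sum, Finset.sum_apply, Pi.single_apply,
    -ZMod.natCast_val, ZMod.natCast_zmod_val]

theorem tau_surjective : Function.Surjective (tau hζ0 hζ (n := n)) := by
  intro m
  change m.toAdd ∈ (tau hζ0 hζ).range.toAddSubgroup'
  rw [PhSp.eq_sum_nsmul m.toAdd]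
  refine AddSubgroup.sum_mem _ fun r _ => add_mem (AddSubgroup.nsmul_mem _ ?_ _)
    (AddSubgroup.nsmul_mem _ ?_ _)
  · exact ⟨zP d n ζ hζ0 r, tau_zP hζ0 hζ r⟩
  · exact ⟨xP d n ζ hζ0 r, tau_xP hζ0 hζ r⟩

theorem ker_tau : (tau hζ0 hζ).ker = Subgroup.zpowers (sP d n ζ hζ0) := by
  refine le_antisymm (fun g hg => ?_) (Subgroup.zpowers_le.2 (tau_sP hζ0 hζ))
  obtain ⟨k, hk⟩ := exists_isWeyl_tau hζ0 hζ g
  rw [(tau hζ0 hζ).mem_ker.1 hg, toAdd_one] at hk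
  exact ⟨k, Subtype.ext ((isWeyl_sP_zpow hζ0 hζ k).ext hk)⟩

theorem orderOf_sP (hζ : IsPrimitiveRoot ζ (dbar d)) : orderOf (sP d n ζ hζ0) = dbar d := by
  refine (orderOf_eq_orderOf_iff.2 fun m => ?_).trans hζ.eq_orderOf.symm
  rw [← OneMemClass.coe_eq_one, ← zpow_natCast, ← zpow_natCast]
  exact (isWeyl_sP_zpow hζ0 hζ m).eq_one_iff (pauliChar_injective hζ)

theorem mul_eq_sP_pow_mul (x y : pauliGroup d n ζ hζ0) :
    x * y = sP d n ζ hζ0 ^ (2 * (phiForm d n (tau hζ0 hζ x).toAdd (tau hζ0 hζ y).toAdd).val) *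
      (y * x) := by
  obtain ⟨k, hx⟩ := exists_isWeyl_tau hζ0 hζ x
  obtain ⟨k', hy⟩ := exists_isWeyl_tau hζ0 hζ y
  set v := (tau hζ0 hζ x).toAdd
  set v' := (tau hζ0 hζ y).toAdd
  have hs := isWeyl_sP_zpow (n := n) hζ0 hζ (2 * (phiForm d n v v').val : ℕ)
  rw [zpow_natCast, zpow_natCast, ← pauliChar_apply hζ] at hs
  refine Subtype.ext ((hx.mul hy).ext ?_)
  convert hs.mul (hy.mul hx) using 1
  · rfl
  · rw [Prod.snd_zero, dotProduct_zero, neg_zero, AddChar.map_zero_eq_one, mul_one,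
      phiForm_eq_dotProduct_sub, show -(v'.1 ⬝ᵥ v.2) = (v.1 ⬝ᵥ v'.2 - v'.1 ⬝ᵥ v.2) + -(v.1 ⬝ᵥ v'.2)
      by ring, AddChar.map_add_eq_mul]
    ring
  · rw [zero_add, add_comm]

theorem exists_tau_eq_orderOf_eq (m : PhSp d n) :
    ∃ g : pauliGroup d n ζ hζ0, tau hζ0 hζ g = Multiplicative.ofAdd m ∧
      orderOf g = addOrderOf m := by
  obtain ⟨g, hg⟩ := tau_surjective hζ0 hζ (Multiplicative.ofAdd m)
  obtain ⟨k, hk⟩ := exists_isWeyl_tau hζ0 hζ g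
  rw [hg, toAdd_ofAdd] at hk
  set D := addOrderOf m with hD
  set s := m.1 ⬝ᵥ m.2
  set j : ℕ := (D - 1) * s.val
  have hg' : IsWeyl (pauliChar hζ) ((sP d n ζ hζ0 ^ ((j : ℤ) - k) * g : pauliGroup d n ζ hζ0) :
      QV d n ≃ₗ[ℂ] QV d n) (ζ ^ j) m := by
    have h := (isWeyl_sP_zpow hζ0 hζ ((j : ℤ) - k)).mul hk
    rwa [zero_add, Prod.snd_zero, dotProduct_zero, neg_zero, AddChar.map_zero_eq_one, mul_one,
      ← zpow_add₀ hζ0, sub_add_cancel, zpow_natCast] at h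
  have hphase : (ζ ^ j) ^ D = pauliChar hζ ((∑ i ∈ Finset.range D, i) • s) := by
    rw [AddChar.map_nsmul_eq_pow, pauliChar_apply, ← pow_mul, ← pow_mul]
    congr 1
    rw [show j * D = s.val * (D * (D - 1)) by ring, ← Finset.sum_range_id_mul_two]
    ring
  have hpow : (sP d n ζ hζ0 ^ ((j : ℤ) - k) * g) ^ D = 1 := by
    have h := hg'.pow D
    rw [addOrderOf_nsmul_eq_zero, hphase, AddChar.map_neg_eq_inv,
      mul_inv_cancel₀ ((pauliChar hζ).val_isUnit _).ne_zero] at h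
    exact OneMemClass.coe_eq_one.1 ((h.eq_one_iff (pauliChar_injective hζ)).2 rfl)
  refine ⟨_, tau_eq_of_isWeyl hζ0 hζ hg', Nat.dvd_antisymm (orderOf_dvd_of_pow_eq_one hpow) ?_⟩
  rw [hD, ← orderOf_ofAdd_eq_addOrderOf, ← tau_eq_of_isWeyl hζ0 hζ hg']
  exact orderOf_map_dvd _ _

end Heisenberg

/-- (i) There is a unique surjective group homomorphism
`τ : P_n → M = ℤ_d^{2n}` with `τ(Z_r) = z_r`, `τ(X_r) = x_r` and `τ(ζ·id) = 0`; its
kernel is the cyclic group generated by the scalar operator `ζ·id`, which has order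
`d̄`.  (ii) For all `x, y ∈ P_n` one has `x y = ξ^{φ(τ(x),τ(y))} y x` (here
`ξ^{c} = ζ^{2c}` is realized as `(ζ·id)^{2·c.val}`, via the canonical integer lift of
`c ∈ ℤ_d`).  (iii) Every element of `M` has a `τ`-preimage in `P_n` of the same
order.  (P_n is a Heisenberg extension of `(ℤ_d^{2n}, φ)`.) -/
theorem pauliGroup_heisenberg_extension
    (d n : ℕ) [NeZero d] (ζ : ℂ) (hζ0 : ζ ≠ 0) (hζ : IsPrimitiveRoot ζ (dbar d)) :
    ∃ t : (pauliGroup d n ζ hζ0) →* Multiplicative (PhSp d n),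
      (Function.Surjective t ∧
        (∀ r : Fin n, t (zP d n ζ hζ0 r) = Multiplicative.ofAdd (zvec d n r)) ∧
        (∀ r : Fin n, t (xP d n ζ hζ0 r) = Multiplicative.ofAdd (xvec d n r)) ∧
        t (sP d n ζ hζ0) = 1) ∧
      (∀ t' : (pauliGroup d n ζ hζ0) →* Multiplicative (PhSp d n),
        (Function.Surjective t' ∧
          (∀ r : Fin n, t' (zP d n ζ hζ0 r) = Multiplicative.ofAdd (zvec d n r)) ∧
          (∀ r : Fin n, t' (xP d n ζ hζ0 r) = Multiplicative.ofAdd (xvec d n r)) ∧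
          t' (sP d n ζ hζ0) = 1) → t' = t) ∧
      MonoidHom.ker t = Subgroup.zpowers (sP d n ζ hζ0) ∧
      orderOf (sP d n ζ hζ0) = dbar d ∧
      (∀ x y : (pauliGroup d n ζ hζ0),
        x * y =
          (sP d n ζ hζ0) ^
              (2 * (phiForm d n (Multiplicative.toAdd (t x)) (Multiplicative.toAdd (t y))).val) *
            (y * x)) ∧
      (∀ m : PhSp d n, ∃ g : (pauliGroup d n ζ hζ0),
        t g = Multiplicative.ofAdd m ∧ orderOf g = addOrderOf m) := by
  refine ⟨tau hζ0 hζ, ⟨tau_surjective hζ0 hζ, tau_zP hζ0 hζ, tau_xP hζ0 hζ, tau_sP hζ0 hζ⟩,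
    fun t' ⟨_, hz, hx, hs⟩ => ?_, ker_tau hζ0 hζ, orderOf_sP hζ0 hζ, mul_eq_sP_pow_mul hζ0 hζ,
    exists_tau_eq_orderOf_eq hζ0 hζ⟩
  exact pauliGroup_hom_ext (hs.trans (tau_sP hζ0 hζ).symm)
    (fun r => (hx r).trans (tau_xP hζ0 hζ r).symm) (fun r => (hz r).trans (tau_zP hζ0 hζ r).symm)

end QuditPauli
end
end

section
/- Let M be a finite ℤ_d-module with an alternating form φ, and let τ : G → M and τ' : G' → M be two Heisenberg extensions of (M,φ). Then there exists a group isomorphism ι : G → G' with τ' ∘ ι = τ. -/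
/-!
Let `n = d̄`. In the fibre product `H = G ×_M G'` the commutation rules of `G` and `G'` carry the
same exponent, so `H / ⟨(ζ, ζ')⟩` is abelian; it has exponent `n` by condition (c), and the image of
`(ζ, 1)` has order `n`. As `ℤ/n` is self-injective, this cyclic subgroup splits off, giving
`ψ : H → ℤ/n` with `ψ (ζ, ζ') = 0` and `ψ (ζ, 1) = 1`. The kernel of `ψ` meets `ker τ × 1` and
`1 × ker τ'` trivially and projects onto both factors, so it is the graph of an isomorphism
over `M`.
-/

/-- `d̄`: equals `d` if `d` is odd and `2d` if `d` is even. -/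
def dbar (d : ℕ) : ℕ := if d % 2 = 1 then d else 2 * d

open Multiplicative

namespace ZMod

variable {n : ℕ} [NeZero n]

theorem exists_mul_eq_of_annihilator_le {a b : ZMod n} (h : ∀ x : ZMod n, x * a = 0 → x * b = 0) :
    ∃ c, c * a = b := by
  -- `n / gcd a n` kills `a`, hence `b`; so `gcd a n ∣ b`, and `gcd a n = a * a⁻¹` in `ZMod n`.
  set g := Nat.gcd a.val n
  have hgn : g ∣ n := Nat.gcd_dvd_right _ _
  have hpos : 0 < n / g := Nat.div_pos (Nat.le_of_dvd (NeZero.pos n) hgn)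
    (Nat.gcd_pos_of_pos_right _ (NeZero.pos n))
  have key : ∀ y : ZMod n, ((n / g : ℕ) : ZMod n) * y = 0 ↔ g ∣ y.val := fun y => by
    rw [← natCast_zmod_val y, ← Nat.cast_mul, natCast_eq_zero_iff, val_natCast_of_lt y.val_lt,
      ← Nat.mul_dvd_mul_iff_left hpos (b := g), Nat.div_mul_cancel hgn]
  obtain ⟨t, ht⟩ := (key b).1 (h _ ((key a).2 (Nat.gcd_dvd_left _ _)))
  refine ⟨a⁻¹ * t, ?_⟩
  rw [← natCast_zmod_val b, ht, Nat.cast_mul, ← mul_inv_eq_gcd]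
  ring

theorem baer_self : Module.Baer (ZMod n) (ZMod n) := by
  have : IsPrincipalIdealRing (ZMod n) :=
    .of_surjective (Int.castRingHom (ZMod n)) intCast_surjective
  intro I g
  obtain ⟨a, rfl⟩ := (IsPrincipalIdealRing.principal I).principal
  let a' : Ideal.span {a} := ⟨a, Ideal.mem_span_singleton_self a⟩
  obtain ⟨c, hc⟩ := exists_mul_eq_of_annihilator_le (a := a) (b := g a') fun x hx => by
    rw [← smul_eq_mul, ← map_smul, show x • a' = 0 from Subtype.ext hx, map_zero]
  refine ⟨LinearMap.mulLeft (ZMod n) c, fun x hx => ?_⟩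
  obtain ⟨y, rfl⟩ := Ideal.mem_span_singleton'.1 hx
  rw [show (⟨y * a, hx⟩ : Ideal.span {a}) = y • a' from rfl, map_smul, ← hc]
  simp only [LinearMap.mulLeft_apply, smul_eq_mul]
  ring

end ZMod

theorem zpow_eq_one_iff_intCast_eq_zero {G : Type*} [Group G] {z : G} {n : ℕ} (hz : orderOf z = n)
    (a : ℤ) : z ^ a = 1 ↔ (a : ZMod n) = 0 := by
  rw [ZMod.intCast_zmod_eq_zero_iff_dvd, ← hz, orderOf_dvd_iff_zpow_eq_one]

theorem CommGroup.exists_monoidHom_zmod_eq_ofAdd_one {E : Type*} [CommGroup E] {n : ℕ}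
    [NeZero n] (hE : ∀ e : E, e ^ n = 1) {c : E} (hc : orderOf c = n) :
    ∃ r : E →* Multiplicative (ZMod n), r c = ofAdd 1 := by
  have : Module (ZMod n) (Additive E) := AddCommGroup.zmodModule fun e => hE e.toMul
  let i := LinearMap.toSpanSingleton (ZMod n) (Additive E) (Additive.ofMul c)
  have hi : Function.Injective i := by
    rw [← LinearMap.ker_eq_bot, LinearMap.ker_eq_bot']
    intro x hx
    rw [LinearMap.toSpanSingleton_apply, ← ZMod.natCast_zmod_val x, Nat.cast_smul_eq_nsmul,
      ← ofMul_pow, ofMul_eq_zero, ← orderOf_dvd_iff_pow_eq_one, hc] at hx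
    rw [← ZMod.natCast_zmod_val x, ZMod.natCast_eq_zero_iff]
    exact hx
  obtain ⟨r, hr⟩ := ZMod.baer_self.extension_property i hi LinearMap.id
  exact ⟨r.toAddMonoidHom.toMultiplicativeRight,
    congrArg ofAdd (by simpa [i] using LinearMap.congr_fun hr 1)⟩

open scoped IsMulCommutative in
theorem exists_monoidHom_zmod_of_commutator_le {H : Type*} [Group H] {n : ℕ} [NeZero n]
    (hexp : ∀ p : H, p ^ n = 1) {w : H} (hw : commutator H ≤ Subgroup.zpowers w) {c : H}
    (hc : ∀ k : ℕ, c ^ k ∈ Subgroup.zpowers w → n ∣ k) :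
    ∃ ψ : H →* Multiplicative (ZMod n), ψ w = 1 ∧ ψ c = ofAdd 1 := by
  have := Subgroup.Normal.of_commutator_le (h := hw)
  have := Subgroup.Normal.quotient_commutative_iff_commutator_le.2 hw
  let π := QuotientGroup.mk' (Subgroup.zpowers w)
  have hπ : ∀ p, π p = 1 ↔ p ∈ Subgroup.zpowers w := QuotientGroup.eq_one_iff
  obtain ⟨r, hr⟩ := CommGroup.exists_monoidHom_zmod_eq_ofAdd_one (n := n) (c := π c)
    (fun e => by
      obtain ⟨p, rfl⟩ := QuotientGroup.mk'_surjective _ e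
      rw [← map_pow, hexp, map_one])
    (by
      refine Nat.dvd_antisymm (orderOf_dvd_of_pow_eq_one ?_) (hc _ ?_)
      · rw [← map_pow, hexp, map_one]
      · rw [← hπ, map_pow, pow_orderOf_eq_one])
  refine ⟨r.comp π, ?_, hr⟩
  rw [MonoidHom.comp_apply, (hπ w).2 (Subgroup.mem_zpowers w), map_one]

section FiberProduct

variable {G G' Q : Type*} [Group G] [Group G'] [Group Q]

def fiberProduct (τ : G →* Q) (τ' : G' →* Q) : Subgroup (G × G') :=
  (τ.comp (MonoidHom.fst G G')).eqLocus (τ'.comp (MonoidHom.snd G G'))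

@[simp]
theorem mem_fiberProduct {τ : G →* Q} {τ' : G' →* Q} {p : G × G'} :
    p ∈ fiberProduct τ τ' ↔ τ p.1 = τ' p.2 :=
  Iff.rfl

variable {τ : G →* Q} {τ' : G' →* Q} {z : G} {z' : G'} {n : ℕ}

theorem mk_mem_fiberProduct_of_mem_ker {g : G} {g' : G'} (hg : g ∈ τ.ker) (hg' : g' ∈ τ'.ker) :
    (g, g') ∈ fiberProduct τ τ' := by
  rw [mem_fiberProduct, τ.mem_ker.1 hg, τ'.mem_ker.1 hg']

theorem exists_mulEquiv_of_fiberProduct_retraction (hτ : Function.Surjective τ)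
    (hτ' : Function.Surjective τ') (hker : τ.ker = Subgroup.zpowers z)
    (hker' : τ'.ker = Subgroup.zpowers z') (hz : orderOf z = n) (hz' : orderOf z' = n)
    (ψ : fiberProduct τ τ' →* Multiplicative (ZMod n))
    (hψ : ∀ (a b : ℤ) (h : (z ^ a, z' ^ b) ∈ fiberProduct τ τ'),
      ψ ⟨_, h⟩ = ofAdd ((a - b : ℤ) : ZMod n)) :
    ∃ e : G ≃* G', ∀ g, τ' (e g) = τ g := by
  have hmem (a b : ℤ) : (z ^ a, z' ^ b) ∈ fiberProduct τ τ' :=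
    mk_mem_fiberProduct_of_mem_ker (hker ▸ zpow_mem (Subgroup.mem_zpowers z) a)
      (hker' ▸ zpow_mem (Subgroup.mem_zpowers z') b)
  have hcorrect (p : fiberProduct τ τ') (a b : ℤ) (hab : ((a - b : ℤ) : ZMod n) = -toAdd (ψ p)) :
      p * ⟨_, hmem a b⟩ ∈ ψ.ker := by
    rw [MonoidHom.mem_ker, map_mul, hψ, ← ofAdd_toAdd (ψ p), ← ofAdd_add, hab, add_neg_cancel,
      ofAdd_zero]
  let f := (fiberProduct τ τ').subtype.comp ψ.ker.subtype
  have hline (k : ψ.ker) : (f k).1 = 1 ↔ (f k).2 = 1 := by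
    obtain ⟨⟨⟨g, g'⟩, hgg'⟩, hk⟩ := k
    change g = 1 ↔ g' = 1
    replace hgg' : τ g = τ' g' := hgg'
    suffices τ g = 1 → (g = 1 ↔ g' = 1) from
      ⟨fun h => (this (by rw [h, map_one])).1 h, fun h => (this (by rw [hgg', h, map_one])).2 h⟩
    intro hg
    obtain ⟨a, rfl⟩ := Subgroup.mem_zpowers_iff.1 (hker ▸ τ.mem_ker.2 hg)
    obtain ⟨b, rfl⟩ := Subgroup.mem_zpowers_iff.1 (hker' ▸ τ'.mem_ker.2 (hgg' ▸ hg))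
    rw [MonoidHom.mem_ker, hψ, ofAdd_eq_one, Int.cast_sub, sub_eq_zero] at hk
    rw [zpow_eq_one_iff_intCast_eq_zero hz, zpow_eq_one_iff_intCast_eq_zero hz', hk]
  have hfst : Function.Surjective (Prod.fst ∘ f) := fun g => by
    obtain ⟨g₀, hg₀⟩ := hτ' (τ g)
    obtain ⟨t, ht⟩ := ZMod.intCast_surjective (toAdd (ψ ⟨(g, g₀), hg₀.symm⟩))
    exact ⟨⟨_, hcorrect _ 0 t (by rw [← ht]; push_cast; ring)⟩, by simp [f]⟩
  have hsnd : Function.Surjective (Prod.snd ∘ f) := fun g' => by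
    obtain ⟨g₀, hg₀⟩ := hτ (τ' g')
    obtain ⟨t, ht⟩ := ZMod.intCast_surjective (toAdd (ψ ⟨(g₀, g'), hg₀⟩))
    exact ⟨⟨_, hcorrect _ (-t) 0 (by rw [← ht]; push_cast; ring)⟩, by simp [f]⟩
  obtain ⟨e, he⟩ := MonoidHom.exists_mulEquiv_range_eq_graph hfst hsnd fun k₁ k₂ => by
    simpa [← inv_mul_eq_one (a := (f k₁).1), ← inv_mul_eq_one (a := (f k₁).2)] using
      hline (k₁⁻¹ * k₂)
  refine ⟨e, fun g => ?_⟩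
  obtain ⟨k, hk⟩ : (g, e g) ∈ f.range := he ▸ rfl
  have hmem_k := (k : fiberProduct τ τ').2
  rw [show ((k : fiberProduct τ τ') : G × G') = (g, e g) from hk, mem_fiberProduct] at hmem_k
  exact hmem_k.symm

theorem exists_mulEquiv_of_fiberProduct_comm [NeZero n] (hτ : Function.Surjective τ)
    (hτ' : Function.Surjective τ') (hker : τ.ker = Subgroup.zpowers z)
    (hker' : τ'.ker = Subgroup.zpowers z') (hz : orderOf z = n) (hz' : orderOf z' = n)
    (hexp : ∀ g : G, g ^ n = 1) (hexp' : ∀ g' : G', g' ^ n = 1)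
    (hcomm : ∀ p ∈ fiberProduct τ τ', ∀ q ∈ fiberProduct τ τ',
      ∃ k : ℤ, p * q = (z, z') ^ k * (q * p)) :
    ∃ e : G ≃* G', ∀ g, τ' (e g) = τ g := by
  have hzk : z ∈ τ.ker := hker ▸ Subgroup.mem_zpowers z
  have hzk' : z' ∈ τ'.ker := hker' ▸ Subgroup.mem_zpowers z'
  let w : fiberProduct τ τ' := ⟨(z, z'), mk_mem_fiberProduct_of_mem_ker hzk hzk'⟩
  let c : fiberProduct τ τ' := ⟨(z, 1), mk_mem_fiberProduct_of_mem_ker hzk (one_mem _)⟩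
  have hw : commutator (fiberProduct τ τ') ≤ Subgroup.zpowers w := by
    rw [commutator_def, Subgroup.commutator_le]
    rintro ⟨p, hp⟩ - ⟨q, hq⟩ -
    obtain ⟨k, hk⟩ := hcomm p hp q hq
    refine Subgroup.mem_zpowers_iff.2 ⟨k, Subtype.ext ?_⟩
    simp only [Subgroup.coe_zpow, commutatorElement_def, Subgroup.coe_mul, Subgroup.coe_inv, hk, w]
    group
  have hc (k : ℕ) (hk : c ^ k ∈ Subgroup.zpowers w) : n ∣ k := by
    obtain ⟨j, hj⟩ := Subgroup.mem_zpowers_iff.1 hk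
    have hj₁ : z ^ j = z ^ (k : ℤ) := by
      simpa [w, c] using congrArg (fun p : fiberProduct τ τ' => p.1.1) hj
    have hj₂ : z' ^ j = 1 := by simpa [w, c] using congrArg (fun p : fiberProduct τ τ' => p.1.2) hj
    have hzk : z ^ k = 1 := by
      rw [← zpow_natCast, ← hj₁, zpow_eq_one_iff_intCast_eq_zero hz,
        ← zpow_eq_one_iff_intCast_eq_zero hz', hj₂]
    exact hz ▸ orderOf_dvd_of_pow_eq_one hzk
  obtain ⟨ψ, hψw, hψc⟩ := exists_monoidHom_zmod_of_commutator_le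
    (fun p => Subtype.ext (Prod.ext (hexp _) (hexp' _))) hw hc
  refine exists_mulEquiv_of_fiberProduct_retraction hτ hτ' hker hker' hz hz' ψ fun a b h => ?_
  have : (⟨(z ^ a, z' ^ b), h⟩ : fiberProduct τ τ') = c ^ (a - b) * w ^ b :=
    Subtype.ext (Prod.ext (by simp [c, w, ← zpow_add]) (by simp [c, w]))
  rw [this, map_mul, map_zpow, map_zpow, hψw, hψc, one_zpow, mul_one, ← ofAdd_zsmul, zsmul_one]

end FiberProduct

theorem dvd_dbar (d : ℕ) : d ∣ dbar d := by
  unfold dbar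
  split_ifs
  exacts [dvd_rfl, dvd_mul_left d 2]

instance (d : ℕ) [NeZero d] : NeZero (dbar d) := by
  unfold dbar
  split_ifs <;> infer_instance

structure IsHeisenbergExtension {d : ℕ} {M : Type*} [AddCommGroup M] [Module (ZMod d) M]
    (φ : M →ₗ[ZMod d] M →ₗ[ZMod d] ZMod d) {G : Type*} [Group G] (τ : G →* Multiplicative M)
    (ζ : G) : Prop where
  surjective : Function.Surjective τ
  ker_eq : τ.ker = Subgroup.zpowers ζ
  orderOf_eq : orderOf ζ = dbar d
  mul_eq_zpow_mul : ∀ g h : G, g * h = ζ ^ (2 * (φ (toAdd (τ g)) (toAdd (τ h))).val) * (h * g)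
  exists_lift : ∀ m : M, ∃ g : G, τ g = ofAdd m ∧ orderOf g = addOrderOf m

namespace IsHeisenbergExtension

variable {d : ℕ} {M : Type*} [AddCommGroup M] [Module (ZMod d) M]
  {φ : M →ₗ[ZMod d] M →ₗ[ZMod d] ZMod d} {G G' : Type*} [Group G] [Group G']
  {τ : G →* Multiplicative M} {τ' : G' →* Multiplicative M} {ζ : G} {ζ' : G'}

theorem map_zeta (hG : IsHeisenbergExtension φ τ ζ) : τ ζ = 1 :=
  τ.mem_ker.1 (hG.ker_eq ▸ Subgroup.mem_zpowers ζ)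

theorem commute_zeta (hG : IsHeisenbergExtension φ τ ζ) (g : G) : Commute ζ g :=
  show ζ * g = g * ζ by simpa [hG.map_zeta] using (hG.mul_eq_zpow_mul g ζ).symm

theorem pow_dbar_eq_one (hG : IsHeisenbergExtension φ τ ζ) (g : G) : g ^ dbar d = 1 := by
  obtain ⟨a, ha, hao⟩ := hG.exists_lift (toAdd (τ g))
  obtain ⟨j, hj⟩ := Subgroup.mem_zpowers_iff.1 (hG.ker_eq ▸ τ.mem_ker.2 (show τ (a⁻¹ * g) = 1 by
    rw [map_mul, map_inv, ha, ofAdd_toAdd, inv_mul_cancel]))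
  have hga : g = a * ζ ^ j := by rw [hj, mul_inv_cancel_left]
  have ha_pow : a ^ dbar d = 1 := by
    refine orderOf_dvd_iff_pow_eq_one.1
      (hao ▸ (addOrderOf_dvd_of_nsmul_eq_zero ?_).trans (dvd_dbar d))
    rw [← Nat.cast_smul_eq_nsmul (ZMod d), ZMod.natCast_self, zero_smul]
  rw [hga, ((hG.commute_zeta a).symm.zpow_right j).mul_pow, ha_pow, one_mul, ← zpow_natCast,
    ← zpow_mul, mul_comm, zpow_mul, zpow_natCast, ← hG.orderOf_eq, pow_orderOf_eq_one, one_zpow]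

theorem fiberProduct_mul_eq_zpow_mul (hG : IsHeisenbergExtension φ τ ζ)
    (hG' : IsHeisenbergExtension φ τ' ζ') :
    ∀ p ∈ fiberProduct τ τ', ∀ q ∈ fiberProduct τ τ', ∃ k : ℤ, p * q = (ζ, ζ') ^ k * (q * p) := by
  rintro ⟨g, g'⟩ hp ⟨h, h'⟩ hq
  rw [mem_fiberProduct] at hp hq
  refine ⟨(2 * (φ (toAdd (τ g)) (toAdd (τ h))).val : ℕ), ?_⟩
  rw [zpow_natCast]
  exact Prod.ext (hG.mul_eq_zpow_mul g h) (by simpa [hp, hq] using hG'.mul_eq_zpow_mul g' h')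

theorem exists_mulEquiv [NeZero d] (hG : IsHeisenbergExtension φ τ ζ)
    (hG' : IsHeisenbergExtension φ τ' ζ') : ∃ e : G ≃* G', ∀ g, τ' (e g) = τ g :=
  exists_mulEquiv_of_fiberProduct_comm hG.surjective hG'.surjective hG.ker_eq hG'.ker_eq
    hG.orderOf_eq hG'.orderOf_eq hG.pow_dbar_eq_one hG'.pow_dbar_eq_one
    (hG.fiberProduct_mul_eq_zpow_mul hG')

end IsHeisenbergExtension

theorem heisenberg_extension_unique_general
    (d : ℕ) [NeZero d]
    (M : Type) [AddCommGroup M] [Module (ZMod d) M]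
    (φ : M →ₗ[ZMod d] M →ₗ[ZMod d] ZMod d)
    (G G' : Type) [Group G] [Group G']
    (τ : G →* Multiplicative M) (τ' : G' →* Multiplicative M)
    (zG : G) (zG' : G')
    (hsurj : Function.Surjective τ) (hsurj' : Function.Surjective τ')
    (hker : MonoidHom.ker τ = Subgroup.zpowers zG)
    (hker' : MonoidHom.ker τ' = Subgroup.zpowers zG')
    (hord : orderOf zG = dbar d) (hord' : orderOf zG' = dbar d)
    (hcomm : ∀ g h : G,
      g * h = zG ^ (2 * (φ (Multiplicative.toAdd (τ g)) (Multiplicative.toAdd (τ h))).val)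
        * (h * g))
    (hcomm' : ∀ g h : G',
      g * h = zG' ^ (2 * (φ (Multiplicative.toAdd (τ' g)) (Multiplicative.toAdd (τ' h))).val)
        * (h * g))
    (hlift : ∀ m : M, ∃ g : G, τ g = Multiplicative.ofAdd m ∧ orderOf g = addOrderOf m)
    (hlift' : ∀ m : M, ∃ g : G', τ' g = Multiplicative.ofAdd m ∧ orderOf g = addOrderOf m) :
    ∃ ι : G ≃* G', ∀ g : G, τ' (ι g) = τ g :=
  IsHeisenbergExtension.exists_mulEquiv ⟨hsurj, hker, hord, hcomm, hlift⟩
    ⟨hsurj', hker', hord', hcomm', hlift'⟩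

/-- Let `M` be a finite `ℤ_d`-module with an alternating form `φ`,
and let `τ : G → M` and `τ' : G' → M` be two Heisenberg extensions of `(M, φ)`.  Then
there exists a group isomorphism `ι : G → G'` with `τ' ∘ ι = τ`.

A Heisenberg extension of `(M, φ)` is a group `G` with a surjective homomorphism
`τ : G → M` such that (a) `ker τ` is cyclic of order `d̄` with a distinguished
generator `ζ_G`, (b) `g h = ζ_G^{2·φ(τ(g),τ(h))} h g` for all `g, h ∈ G` (the exponent
is computed via the canonical integer lift `ZMod.val`, well defined since `ζ_G` has
order `d̄` and `d̄ ∣ 2d`), and (c) every element of `M` has a `τ`-preimage in `G` of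
the same order. -/
theorem heisenberg_extension_unique
    (d : ℕ) [NeZero d]
    (M : Type) [AddCommGroup M] [Module (ZMod d) M] [Finite M]
    (φ : M →ₗ[ZMod d] M →ₗ[ZMod d] ZMod d)
    (halt : ∀ m : M, φ m m = 0)
    (G G' : Type) [Group G] [Group G']
    (τ : G →* Multiplicative M) (τ' : G' →* Multiplicative M)
    (zG : G) (zG' : G')
    (hsurj : Function.Surjective τ) (hsurj' : Function.Surjective τ')
    (hker : MonoidHom.ker τ = Subgroup.zpowers zG)
    (hker' : MonoidHom.ker τ' = Subgroup.zpowers zG')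
    (hord : orderOf zG = dbar d) (hord' : orderOf zG' = dbar d)
    (hcomm : ∀ g h : G,
      g * h = zG ^ (2 * (φ (Multiplicative.toAdd (τ g)) (Multiplicative.toAdd (τ h))).val)
        * (h * g))
    (hcomm' : ∀ g h : G',
      g * h = zG' ^ (2 * (φ (Multiplicative.toAdd (τ' g)) (Multiplicative.toAdd (τ' h))).val)
        * (h * g))
    (hlift : ∀ m : M, ∃ g : G, τ g = Multiplicative.ofAdd m ∧ orderOf g = addOrderOf m)
    (hlift' : ∀ m : M, ∃ g : G', τ' g = Multiplicative.ofAdd m ∧ orderOf g = addOrderOf m) :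
    ∃ ι : G ≃* G', ∀ g : G, τ' (ι g) = τ g :=
  heisenberg_extension_unique_general d M φ G G' τ τ' zG zG' hsurj hsurj' hker hker' hord hord'
    hcomm hcomm' hlift hlift'
end

section
/- Let H ⊆ P_n be a commutative subgroup containing no nontrivial scalars. Then dim_ℂ V^H = (dim_ℂ V) / #H = d^n / #H. -/
noncomputable section

/-!
Every element of `P_n` acts as `f ↦ (w ↦ u · ψ(c ⬝ᵥ w) · f(w - b))`, where `u` is a `d̄`-th root
of unity and `ψ(x) = ξ^x` is a primitive character of `ℤ_d`. Hence `P_n` is finite, and such an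
operator has trace zero unless `b = c = 0`, i.e. unless it is a scalar. As `H` contains no
nontrivial scalar, averaging its character gives `dim V^H = (1/#H) ∑_{h ∈ H} tr h = d^n / #H`.
-/

open Module Matrix

theorem Representation.finrank_invariants_mul_card_of_trace_eq_zero {k G V : Type*} [Field k]
    [CharZero k] [Group G] [Finite G] [AddCommGroup V] [Module k V] [FiniteDimensional k V]
    (ρ : Representation k G V) (hρ : ∀ g ≠ 1, LinearMap.trace k V (ρ g) = 0) :
    finrank k ρ.invariants * Nat.card G = finrank k V := by
  have := Fintype.ofFinite G
  have : Invertible (Fintype.card G : k) :=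
    invertibleOfNonzero (Nat.cast_ne_zero.2 Fintype.card_ne_zero)
  have htrace : (finrank k ρ.invariants : k) = ⅟(Fintype.card G : k) * finrank k V := by
    rw [← (Representation.isProj_averageMap ρ).trace]
    simp only [Representation.averageMap, GroupAlgebra.average, map_smul, map_sum,
      Representation.asAlgebraHom_of, smul_eq_mul]
    rw [Finset.sum_eq_single_of_mem 1 (Finset.mem_univ _) fun g _ => hρ g, map_one,
      LinearMap.trace_one]
  rw [Nat.card_eq_fintype_card]
  exact_mod_cast (by rw [htrace, mul_comm, mul_invOf_cancel_left] :
    (finrank k ρ.invariants * Fintype.card G : k) = finrank k V)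

lemma AddChar.pow_eq_one_of_dvd {C : Type*} [CommMonoid C] {d m : ℕ} (ψ : AddChar (ZMod d) C)
    (x : ZMod d) (hm : d ∣ m) : ψ x ^ m = 1 := by
  obtain ⟨k, rfl⟩ := hm
  rw [pow_mul, ← AddChar.map_nsmul_eq_pow, nsmul_eq_mul, ZMod.natCast_self, zero_mul,
    AddChar.map_zero_eq_one, one_pow]

namespace QuditPauli

variable {d n : ℕ}

lemma dvd_dbar (d : ℕ) : d ∣ dbar d := by
  unfold dbar
  split_ifs
  exacts [dvd_rfl, dvd_mul_left d 2]

instance [NeZero d] : NeZero (dbar d) :=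
  ⟨by unfold dbar; split_ifs <;> simp [NeZero.ne d]⟩

lemma _root_.IsPrimitiveRoot.sq_of_dbar [NeZero d] {ζ : ℂ} (hζ : IsPrimitiveRoot ζ (dbar d)) :
    IsPrimitiveRoot (ζ ^ 2) d := by
  unfold dbar at hζ
  split_ifs at hζ with hd
  · exact hζ.pow_of_coprime 2 (Nat.coprime_two_left.2 (Nat.odd_iff.2 hd))
  · exact hζ.pow (by have := NeZero.pos d; omega) rfl

lemma finrank_QV [NeZero d] : finrank ℂ (QV d n) = d ^ n := by
  simp

def phaseShift (ψ : AddChar (ZMod d) ℂ) (u : ℂ) (b c : Fin n → ZMod d) :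
    QV d n →ₗ[ℂ] QV d n where
  toFun f w := u * ψ (c ⬝ᵥ w) * f (w - b)
  map_add' f g := by funext w; simp only [Pi.add_apply]; ring
  map_smul' a f := by funext w; simp only [Pi.smul_apply, smul_eq_mul, RingHom.id_apply]; ring

section phaseShift

variable (ψ : AddChar (ZMod d) ℂ)

@[simp]
lemma phaseShift_apply (u : ℂ) (b c : Fin n → ZMod d) (f : QV d n) (w : Fin n → ZMod d) :
    phaseShift ψ u b c f w = u * ψ (c ⬝ᵥ w) * f (w - b) :=
  rfl

lemma phaseShift_zero_zero (u : ℂ) :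
    phaseShift ψ u (0 : Fin n → ZMod d) 0 = u • LinearMap.id := by
  ext f w
  simp

lemma phaseShift_comp_phaseShift (u u' : ℂ) (b b' c c' : Fin n → ZMod d) :
    phaseShift ψ u b c ∘ₗ phaseShift ψ u' b' c' =
      phaseShift ψ (u * u' * ψ (-(c' ⬝ᵥ b))) (b + b') (c + c') := by
  ext f w
  simp only [LinearMap.comp_apply, phaseShift_apply, dotProduct_sub, add_dotProduct, sub_sub,
    sub_eq_add_neg (c' ⬝ᵥ w), AddChar.map_add_eq_mul]
  ring

def phaseShiftGroup (m : ℕ) [NeZero m] (hm : d ∣ m) : Subgroup (QV d n ≃ₗ[ℂ] QV d n) where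
  carrier := {g | ∃ u b c, u ^ m = 1 ∧ g.toLinearMap = phaseShift ψ u b c}
  one_mem' := ⟨1, 0, 0, one_pow m, by rw [phaseShift_zero_zero, one_smul]; rfl⟩
  mul_mem' := by
    rintro g g' ⟨u, b, c, hu, hg⟩ ⟨u', b', c', hu', hg'⟩
    refine ⟨_, _, _, ?_, (congrArg₂ LinearMap.comp hg hg').trans (phaseShift_comp_phaseShift ..)⟩
    rw [mul_pow, mul_pow, hu, hu', ψ.pow_eq_one_of_dvd _ hm, one_mul, one_mul]
  inv_mem' := by
    rintro g ⟨u, b, c, hu, hg⟩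
    have hu0 : u ≠ 0 := by rintro rfl; simp [NeZero.ne m] at hu
    refine ⟨u⁻¹ * ψ (-(c ⬝ᵥ b)), -b, -c, ?_, ?_⟩
    · rw [mul_pow, inv_pow, hu, ψ.pow_eq_one_of_dvd _ hm, inv_one, one_mul]
    · have hphase : u * (u⁻¹ * ψ (-(c ⬝ᵥ b))) * ψ (-(-c ⬝ᵥ b)) = 1 := by
        rw [neg_dotProduct, neg_neg, mul_assoc, mul_assoc, ← AddChar.map_add_eq_mul,
          neg_add_cancel, AddChar.map_zero_eq_one, mul_one, mul_inv_cancel₀ hu0]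
      have hright : g.toLinearMap ∘ₗ phaseShift ψ (u⁻¹ * ψ (-(c ⬝ᵥ b))) (-b) (-c) =
          LinearMap.id := by
        rw [hg, phaseShift_comp_phaseShift, hphase, add_neg_cancel, add_neg_cancel,
          phaseShift_zero_zero, one_smul]
      ext f : 1
      simpa using congrArg g.symm (LinearMap.congr_fun hright f).symm

instance [NeZero d] (m : ℕ) [NeZero m] (hm : d ∣ m) :
    Finite (phaseShiftGroup (n := n) ψ m hm) := by
  have hroots : {u : ℂ | u ^ m = 1}.Finite :=
    (Polynomial.nthRootsFinset m (1 : ℂ)).finite_toSet.subset fun u hu =>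
      (Polynomial.mem_nthRootsFinset (NeZero.pos m) 1).2 hu
  have hops := ((hroots.prod Set.finite_univ).prod Set.finite_univ).image
    fun p : (ℂ × (Fin n → ZMod d)) × (Fin n → ZMod d) => phaseShift ψ p.1.1 p.1.2 p.2
  refine Set.Finite.to_subtype ((hops.preimage LinearEquiv.toLinearMap_injective.injOn).subset ?_)
  rintro g ⟨u, b, c, hu, hg⟩
  exact ⟨((u, b), c), ⟨⟨hu, trivial⟩, trivial⟩, hg.symm⟩

end phaseShift

lemma trace_phaseShift [NeZero d] {ψ : AddChar (ZMod d) ℂ} (hψ : ψ.IsPrimitive) (u : ℂ)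
    {b c : Fin n → ZMod d} (hbc : b ≠ 0 ∨ c ≠ 0) :
    LinearMap.trace ℂ (QV d n) (phaseShift ψ u b c) = 0 := by
  classical
  rw [LinearMap.trace_eq_matrix_trace ℂ (Pi.basisFun ℂ _), Matrix.trace]
  simp only [Matrix.diag_apply, LinearMap.toMatrix_apply, Pi.basisFun_apply, Pi.basisFun_repr,
    phaseShift_apply]
  rcases eq_or_ne b 0 with rfl | hb
  · obtain ⟨r, hr⟩ := Function.ne_iff.1 (hbc.resolve_left (not_not.2 rfl))
    let χ : AddChar (Fin n → ZMod d) ℂ :=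
      ψ.compAddMonoidHom (AddMonoidHom.mk' (c ⬝ᵥ ·) (dotProduct_add c))
    have hχ : χ ≠ 0 := AddChar.ne_one_iff.2 ⟨Pi.single r 1, by
      simpa [χ, dotProduct_single, hψ.zmod_char_eq_one_iff] using hr⟩
    simpa [χ, ← Finset.mul_sum] using Or.inr (AddChar.sum_eq_zero_iff_ne_zero.2 hχ)
  · refine Finset.sum_eq_zero fun w _ => ?_
    rw [Pi.single_eq_of_ne (by simpa using hb), mul_zero]

lemma scalarOp_eq_smul {c : ℂ} (hc : c ≠ 0) :
    (scalarOp d n c hc).toLinearMap = c • LinearMap.id :=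
  rfl

lemma Xop_eq_phaseShift (ψ : AddChar (ZMod d) ℂ) (r : Fin n) :
    (Xop d n r).toLinearMap = phaseShift ψ 1 (Pi.single r 1) 0 := by
  ext f w
  simp only [Xop, LinearEquiv.coe_coe, LinearEquiv.funCongrLeft_apply, phaseShift_apply,
    LinearMap.funLeft_apply, zero_dotProduct, AddChar.map_zero_eq_one, one_mul]
  congr 1
  funext i
  rcases eq_or_ne i r with rfl | hir
  · simp [shiftEquiv]
  · simp [shiftEquiv, Function.update_of_ne hir, Pi.single_eq_of_ne hir]

lemma Zop_eq_phaseShift [NeZero d] {ξ : ℂ} (hξ0 : ξ ≠ 0) (hξ : ξ ^ d = 1) (r : Fin n) :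
    (Zop d n r ξ hξ0).toLinearMap = phaseShift (AddChar.zmodChar d hξ) 1 0 (Pi.single r 1) := by
  ext f w
  simp [Zop, diagOp, single_dotProduct, AddChar.zmodChar_apply]

lemma pauliGroup_le_phaseShiftGroup [NeZero d] {ζ : ℂ} (hζ0 : ζ ≠ 0) (hζ : ζ ^ dbar d = 1)
    (hξ : (ζ ^ 2) ^ d = 1) :
    pauliGroup d n ζ hζ0 ≤ phaseShiftGroup (AddChar.zmodChar d hξ) (dbar d) (dvd_dbar d) := by
  rw [pauliGroup, Subgroup.closure_le]
  rintro g ((rfl | ⟨r, rfl⟩) | ⟨r, rfl⟩)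
  · exact ⟨ζ, 0, 0, hζ, by rw [scalarOp_eq_smul, phaseShift_zero_zero]⟩
  · exact ⟨1, _, _, one_pow _, Xop_eq_phaseShift _ r⟩
  · exact ⟨1, _, _, one_pow _, Zop_eq_phaseShift _ hξ r⟩

lemma exists_eq_sP_zpow [NeZero d] {ζ : ℂ} {hζ0 : ζ ≠ 0} (hζ : IsPrimitiveRoot ζ (dbar d))
    {g : pauliGroup d n ζ hζ0} {u : ℂ} (hu : u ^ dbar d = 1)
    (hg : (g : QV d n ≃ₗ[ℂ] QV d n).toLinearMap = u • LinearMap.id) :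
    ∃ a : ℤ, g = sP d n ζ hζ0 ^ a := by
  obtain ⟨i, -, rfl⟩ := hζ.eq_pow_of_pow_eq_one hu
  refine ⟨i, Subtype.ext (LinearEquiv.toLinearMap_injective ?_)⟩
  rw [hg, zpow_natCast, SubmonoidClass.coe_pow]
  change _ = LinearEquiv.automorphismGroup.toLinearMapMonoidHom (scalarOp d n ζ hζ0 ^ i)
  rw [map_pow, LinearEquiv.automorphismGroup.toLinearMapMonoidHom_apply, scalarOp_eq_smul,
    smul_pow, Module.End.id_pow]

lemma fixedSpace_eq_invariants {ζ : ℂ} {hζ0 : ζ ≠ 0} (H : Subgroup (pauliGroup d n ζ hζ0)) :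
    fixedSpace H = (Representation.ofDistribMulAction ℂ H (QV d n)).invariants := by
  ext v
  simp [fixedSpace, Representation.mem_invariants]

theorem finrank_fixedSpace_mul_card_general
    (d n : ℕ) [NeZero d] (ζ : ℂ) (hζ0 : ζ ≠ 0) (hζ : IsPrimitiveRoot ζ (dbar d))
    (H : Subgroup (pauliGroup d n ζ hζ0))
    (hscal : ∀ g ∈ H, (∃ a : ℤ, g = (sP d n ζ hζ0) ^ a) → g = 1) :
    Module.finrank ℂ (fixedSpace H) * Nat.card H = Module.finrank ℂ (QV d n) ∧
    Module.finrank ℂ (QV d n) = d ^ n := by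
  have hξ : IsPrimitiveRoot (ζ ^ 2) d := hζ.sq_of_dbar
  have hle := pauliGroup_le_phaseShiftGroup (n := n) hζ0 hζ.pow_eq_one hξ.pow_eq_one
  have : Finite (pauliGroup d n ζ hζ0) := Finite.of_injective _ (Subgroup.inclusion_injective hle)
  refine ⟨?_, finrank_QV⟩
  rw [fixedSpace_eq_invariants]
  refine Representation.finrank_invariants_mul_card_of_trace_eq_zero _ fun h hh => ?_
  obtain ⟨u, b, c, hu, hg⟩ := hle h.1.2
  by_cases hbc : b = 0 ∧ c = 0
  · obtain ⟨rfl, rfl⟩ := hbc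
    rw [phaseShift_zero_zero] at hg
    exact absurd (Subtype.ext (hscal h h.2 (exists_eq_sP_zpow hζ hu hg))) hh
  · change LinearMap.trace ℂ _ (h : QV d n ≃ₗ[ℂ] QV d n).toLinearMap = 0
    rw [hg]
    exact trace_phaseShift (AddChar.zmodChar_primitive_of_primitive_root d hξ) u
      (not_and_or.1 hbc)

/-- Let `H ⊆ P_n` be a commutative subgroup containing no
nontrivial scalars.  Then `dim_ℂ V^H = (dim_ℂ V) / #H = d^n / #H`, stated here in the
equivalent (division-free) form `dim_ℂ V^H · #H = dim_ℂ V = d^n`. -/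
theorem finrank_fixedSpace_mul_card
    (d n : ℕ) [NeZero d] (ζ : ℂ) (hζ0 : ζ ≠ 0) (hζ : IsPrimitiveRoot ζ (dbar d))
    (H : Subgroup (pauliGroup d n ζ hζ0))
    (hcomm : ∀ a ∈ H, ∀ b ∈ H, a * b = b * a)
    (hscal : ∀ g ∈ H, (∃ a : ℤ, g = (sP d n ζ hζ0) ^ a) → g = 1) :
    Module.finrank ℂ (fixedSpace H) * Nat.card H = Module.finrank ℂ (QV d n) ∧
    Module.finrank ℂ (QV d n) = d ^ n :=
  finrank_fixedSpace_mul_card_general d n ζ hζ0 hζ H hscal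

end QuditPauli
end
end
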